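/- arXiv:1904.06297 — 7 statements merged into one kernel-verified Lean document; each statement's English description precedes it below -/
import Mathlib

section
/- Let (A, ∫_A) and (T, ∫_T) be oriented graded Artinian Gorenstein algebras of socle degrees d and k, and π : A → T a graded algebra map. Then there exists a unique A-module map ι : T(k−d) → A with ι(1_T) = τ_π, where τ_π is the Thom class of π; explicitly, ι is defined by the condition ∫_A ι(t)·a = ∫_T t·π(a) for all a ∈ A, t ∈ T. -/
/-!
Multiplication followed by `∫_A` is a nondegenerate pairing on the finite-dimensional algebra `A`,
so it identifies `A` with its dual. Hence `ι` is forced: `ι t` must be the element representing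
the functional `a ↦ ∫_T t · π(a)`. Every further property of `ι` (`A`-linearity, `ι 1 = τ_π`,
the degree shift) is checked by pairing both sides against arbitrary elements of `A`; for the
degree shift, `∫_T` vanishes outside degree `k`.
-/

/-- An oriented graded Artinian Gorenstein algebra: a finite-dimensional graded
algebra with top (socle) degree `d`, equipped with an orientation `intg`
(a nonzero linear functional supported in degree `d`) whose associated
multiplication pairing is non-degenerate. -/
structure OrientedAG (F : Type) [Field F] {A : Type} [CommRing A] [Algebra F A]
    (𝒜 : ℕ → Submodule F A) (d : ℕ) : Type where
  fin : FiniteDimensional F A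
  top_ne : 𝒜 d ≠ ⊥
  top_vanish : ∀ i, d < i → 𝒜 i = ⊥
  intg : A →ₗ[F] F
  intg_supported : ∀ i, i ≠ d → ∀ a ∈ 𝒜 i, intg a = 0
  intg_ne : intg ≠ 0
  nondeg : ∀ a : A, a ≠ 0 → ∃ b : A, intg (a * b) ≠ 0

namespace OrientedAG

variable {F : Type} [Field F] {A : Type} [CommRing A] [Algebra F A]
  {𝒜 : ℕ → Submodule F A} {d : ℕ} (OA : OrientedAG F 𝒜 d)

def pairing : LinearMap.BilinForm F A :=
  (LinearMap.mul F A).compr₂ OA.intg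

@[simp]
lemma pairing_apply (a b : A) : OA.pairing a b = OA.intg (a * b) := rfl

lemma pairing_nondegenerate : OA.pairing.Nondegenerate := by
  refine ⟨fun a ha => ?_, fun b hb => ?_⟩
  · by_contra ha0
    obtain ⟨b, hb⟩ := OA.nondeg a ha0
    exact hb (ha b)
  · by_contra hb0
    obtain ⟨a, ha⟩ := OA.nondeg b hb0
    exact ha (by simpa only [pairing_apply, mul_comm] using hb a)

lemma eq_of_forall_intg_mul_eq {x y : A} (h : ∀ b, OA.intg (x * b) = OA.intg (y * b)) :
    x = y :=
  sub_eq_zero.mp <| OA.pairing_nondegenerate.1 _ fun b => by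
    rw [pairing_apply, sub_mul, map_sub, h b, sub_self]

noncomputable def dualEquiv : A ≃ₗ[F] Module.Dual F A :=
  haveI := OA.fin
  OA.pairing.toDual OA.pairing_nondegenerate

@[simp]
lemma intg_dualEquiv_symm_mul (φ : Module.Dual F A) (a : A) :
    OA.intg (OA.dualEquiv.symm φ * a) = φ a := by
  have := OA.fin
  exact LinearMap.BilinForm.apply_toDual_symm_apply (hB := OA.pairing_nondegenerate) φ a

section Graded

variable [GradedAlgebra 𝒜]
open DirectSum

lemma intg_eq_intg_decompose (y : A) : OA.intg y = OA.intg (decompose 𝒜 y d) := by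
  induction y using Decomposition.inductionOn 𝒜 with
  | zero => simp
  | @homogeneous i y =>
    by_cases hi : i = d
    · subst hi
      rw [decompose_coe, of_eq_same]
    · rw [decompose_of_mem_ne 𝒜 y.2 hi, OA.intg_supported i hi y y.2, map_zero]
  | add y y' hy hy' =>
    rw [decompose_add, DirectSum.add_apply, Submodule.coe_add, map_add, map_add, hy, hy']

lemma intg_mul_of_mem {x b : A} {m : ℕ} (hb : b ∈ 𝒜 m) (hm : m ≤ d) :
    OA.intg (x * b) = OA.intg (decompose 𝒜 x (d - m) * b) := by
  rw [OA.intg_eq_intg_decompose, coe_decompose_mul_of_right_mem_of_le 𝒜 hb hm]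

lemma eq_zero_of_forall_intg_mul_homogeneous {y : A}
    (h : ∀ m, ∀ b ∈ 𝒜 m, OA.intg (y * b) = 0) : y = 0 :=
  OA.pairing_nondegenerate.1 y fun b => by
    induction b using Decomposition.inductionOn 𝒜 with
    | zero => simp
    | homogeneous b => exact h _ b b.2
    | add b b' hb hb' => rw [map_add, hb, hb', add_zero]

lemma mem_of_forall_intg_mul_eq_zero {x : A} {n : ℕ}
    (h : ∀ m, ∀ b ∈ 𝒜 m, n + m ≠ d → OA.intg (x * b) = 0) : x ∈ 𝒜 n := by
  suffices x - decompose 𝒜 x n = 0 by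
    rw [sub_eq_zero.mp this]
    exact Submodule.coe_mem _
  refine OA.eq_zero_of_forall_intg_mul_homogeneous fun m b hb => ?_
  rw [sub_mul, map_sub, sub_eq_zero]
  by_cases hnm : n + m = d
  · rw [OA.intg_mul_of_mem hb (by omega), show d - m = n by omega]
  · rw [h m b hb hnm,
      OA.intg_supported _ hnm _ (SetLike.mul_mem_graded (Submodule.coe_mem _) hb)]

end Graded

variable {T : Type} [CommRing T] [Algebra F T] (intgT : T →ₗ[F] F) (π : A →ₐ[F] T)

noncomputable def gysin : T →ₗ[F] A :=
  OA.dualEquiv.symm.toLinearMap ∘ₗ ((LinearMap.mul F T).compr₂ intgT).compl₂ π.toLinearMap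

@[simp]
lemma intg_gysin_mul (t : T) (a : A) :
    OA.intg (OA.gysin intgT π t * a) = intgT (t * π a) := by
  simp [gysin]

variable {OA intgT π}

lemma eq_gysin_of_intg_mul {ι : T →ₗ[F] A}
    (hι : ∀ t a, OA.intg (ι t * a) = intgT (t * π a)) : ι = OA.gysin intgT π :=
  LinearMap.ext fun t => OA.eq_of_forall_intg_mul_eq fun a => by
    rw [hι, intg_gysin_mul]

lemma gysin_map_mul (a : A) (t : T) : OA.gysin intgT π (π a * t) = a * OA.gysin intgT π t :=
  OA.eq_of_forall_intg_mul_eq fun b => by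
    rw [intg_gysin_mul, mul_assoc a, mul_left_comm a, intg_gysin_mul, map_mul π, mul_left_comm t,
      mul_assoc]

lemma gysin_one {τ : A} (hτ : ∀ a, OA.intg (τ * a) = intgT (π a)) :
    OA.gysin intgT π 1 = τ :=
  OA.eq_of_forall_intg_mul_eq fun a => by rw [intg_gysin_mul, one_mul, hτ]

lemma gysin_mem [GradedAlgebra 𝒜] {𝒯 : ℕ → Submodule F T} [SetLike.GradedMonoid 𝒯] {k : ℕ}
    (hk : k ≤ d) (hπ : ∀ i, ∀ a ∈ 𝒜 i, π a ∈ 𝒯 i)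
    (hT : ∀ i, i ≠ k → ∀ t ∈ 𝒯 i, intgT t = 0) {i : ℕ} {t : T} (ht : t ∈ 𝒯 i) :
    OA.gysin intgT π t ∈ 𝒜 (i + (d - k)) :=
  OA.mem_of_forall_intg_mul_eq_zero fun m a ha hm => by
    rw [intg_gysin_mul]
    exact hT (i + m) (by omega) _ (SetLike.mul_mem_graded ht (hπ m a ha))

end OrientedAG

theorem gysinMap_existsUnique_general
    (F : Type) [Field F] {A T : Type} [CommRing A] [Algebra F A] [CommRing T] [Algebra F T]
    (𝒜 : ℕ → Submodule F A) (𝒯 : ℕ → Submodule F T)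
    [GradedAlgebra 𝒜] [GradedAlgebra 𝒯]
    {d k : ℕ} (hk : k ≤ d)
    (OA : OrientedAG F 𝒜 d) (OT : OrientedAG F 𝒯 k)
    (π : A →ₐ[F] T) (hπ : ∀ i, ∀ a ∈ 𝒜 i, π a ∈ 𝒯 i)
    (τ : A)
    (hτ : ∀ a : A, OA.intg (τ * a) = OT.intg (π a)) :
    ∃! ι : T →ₗ[F] A,
      (∀ (a : A) (t : T), ι (π a * t) = a * ι t) ∧
      ι 1 = τ ∧
      (∀ (t : T) (a : A), OA.intg (ι t * a) = OT.intg (t * π a)) ∧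
      (∀ i, ∀ t ∈ 𝒯 i, ι t ∈ 𝒜 (i + (d - k))) :=
  ⟨OA.gysin OT.intg π,
    ⟨OrientedAG.gysin_map_mul, OrientedAG.gysin_one hτ, OA.intg_gysin_mul OT.intg π,
      fun _ _ ht => OrientedAG.gysin_mem hk hπ OT.intg_supported ht⟩,
    fun _ hι => OrientedAG.eq_gysin_of_intg_mul hι.2.2.1⟩

/-- Lemma: existence and uniqueness of the Gysin map.
Given oriented AG algebras `A`, `T` of socle degrees `d`, `k`, a graded algebra
map `π : A → T` and its Thom class `τ`, there is a unique `A`-module map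
`ι : T(k-d) → A` with `ι 1 = τ`; it is characterized by
`∫_A (ι t · a) = ∫_T (t · π a)` and raises degrees by `d - k`. -/
theorem gysinMap_existsUnique
    (F : Type) [Field F] {A T : Type} [CommRing A] [Algebra F A] [CommRing T] [Algebra F T]
    (𝒜 : ℕ → Submodule F A) (𝒯 : ℕ → Submodule F T)
    [GradedAlgebra 𝒜] [GradedAlgebra 𝒯]
    {d k : ℕ} (hk : k ≤ d)
    (OA : OrientedAG F 𝒜 d) (OT : OrientedAG F 𝒯 k)
    (π : A →ₐ[F] T) (hπ : ∀ i, ∀ a ∈ 𝒜 i, π a ∈ 𝒯 i)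
    (τ : A) (hτ_mem : τ ∈ 𝒜 (d - k))
    (hτ : ∀ a : A, OA.intg (τ * a) = OT.intg (π a)) :
    ∃! ι : T →ₗ[F] A,
      (∀ (a : A) (t : T), ι (π a * t) = a * ι t) ∧
      ι 1 = τ ∧
      (∀ (t : T) (a : A), OA.intg (ι t * a) = OT.intg (t * π a)) ∧
      (∀ i, ∀ t ∈ 𝒯 i, ι t ∈ 𝒜 (i + (d - k))) :=
  gysinMap_existsUnique_general F 𝒜 𝒯 hk OA OT π hπ τ hτ
end

section
/- Let (A, ∫_A) and (T, ∫_T) be oriented graded Artinian Gorenstein algebras with a graded algebra map π : A → T and associated Gysin map ι : T(k−d) → A. Then π is surjective if and only if ι is injective. -/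
/-!
Let `P_A : A → A^∨` and `P_T : T → T^∨` be the multiplication pairings `x ↦ (y ↦ ∫ x y)`.
The defining identity of the Gysin map says exactly that `P_A ∘ ι = π^∨ ∘ P_T`. By Poincaré
duality `P_A` is injective and `P_T` is an isomorphism, so `ι` is injective iff the dual map
`π^∨` is, i.e. iff `π` is surjective.
-/

section MulPairing

variable {F A : Type*} [Field F] [Ring A] [Algebra F A]

def mulPairing (φ : A →ₗ[F] F) : A →ₗ[F] Module.Dual F A :=
  (LinearMap.mul F A).compr₂ φ

theorem mulPairing_injective {φ : A →ₗ[F] F} (hφ : ∀ a : A, a ≠ 0 → ∃ b : A, φ (a * b) ≠ 0) :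
    Function.Injective (mulPairing φ) := by
  rw [← LinearMap.ker_eq_bot, LinearMap.ker_eq_bot']
  intro a ha
  by_contra ha0
  obtain ⟨b, hb⟩ := hφ a ha0
  exact hb (LinearMap.congr_fun ha b)

theorem mulPairing_bijective [FiniteDimensional F A] {φ : A →ₗ[F] F}
    (hφ : ∀ a : A, a ≠ 0 → ∃ b : A, φ (a * b) ≠ 0) :
    Function.Bijective (mulPairing φ) :=
  have hinj := mulPairing_injective hφ
  ⟨hinj, (LinearMap.injective_iff_surjective_of_finrank_eq_finrank
    (Subspace.dual_finrank_eq (K := F) (V := A)).symm).mp hinj⟩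

theorem gysin_injective_iff_surjective {T : Type*} [Ring T] [Algebra F T] [FiniteDimensional F T]
    {φA : A →ₗ[F] F} {φT : T →ₗ[F] F}
    (hφA : ∀ a : A, a ≠ 0 → ∃ b : A, φA (a * b) ≠ 0)
    (hφT : ∀ t : T, t ≠ 0 → ∃ s : T, φT (t * s) ≠ 0)
    (π : A →ₗ[F] T) (ι : T →ₗ[F] A) (hι : ∀ (t : T) (a : A), φA (ι t * a) = φT (t * π a)) :
    Function.Injective ι ↔ Function.Surjective π := by
  have gysin_square : mulPairing φA ∘ₗ ι = π.dualMap ∘ₗ mulPairing φT :=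
    LinearMap.ext₂ hι
  rw [← (mulPairing_injective hφA).of_comp_iff ι, ← LinearMap.coe_comp, gysin_square,
    LinearMap.coe_comp, Function.Injective.of_comp_iff' _ (mulPairing_bijective hφT),
    LinearMap.dualMap_injective_iff]

end MulPairing

theorem surjective_iff_gysin_injective_general
    (F : Type) [Field F] {A T : Type} [CommRing A] [Algebra F A] [CommRing T] [Algebra F T]
    (𝒜 : ℕ → Submodule F A) (𝒯 : ℕ → Submodule F T)
    {d k : ℕ}
    (OA : OrientedAG F 𝒜 d) (OT : OrientedAG F 𝒯 k)
    (π : A →ₐ[F] T)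
    (ι : T →ₗ[F] A)
    (hι : ∀ (t : T) (a : A), OA.intg (ι t * a) = OT.intg (t * π a)) :
    Function.Surjective π ↔ Function.Injective ι := by
  have := OT.fin
  exact (gysin_injective_iff_surjective OA.nondeg OT.nondeg π.toLinearMap ι hι).symm

/-- Lemma: `π` is surjective iff the Gysin map `ι` is injective.
Here `ι : T(k-d) → A` is the Gysin map of `π`, characterized by
`∫_A (ι t · a) = ∫_T (t · π a)` for all `a ∈ A`, `t ∈ T`. -/
theorem surjective_iff_gysin_injective
    (F : Type) [Field F] {A T : Type} [CommRing A] [Algebra F A] [CommRing T] [Algebra F T]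
    (𝒜 : ℕ → Submodule F A) (𝒯 : ℕ → Submodule F T)
    [GradedAlgebra 𝒜] [GradedAlgebra 𝒯]
    {d k : ℕ} (hk : k ≤ d)
    (OA : OrientedAG F 𝒜 d) (OT : OrientedAG F 𝒯 k)
    (π : A →ₐ[F] T) (hπ : ∀ i, ∀ a ∈ 𝒜 i, π a ∈ 𝒯 i)
    (ι : T →ₗ[F] A)
    (hι : ∀ (t : T) (a : A), OA.intg (ι t * a) = OT.intg (t * π a)) :
    Function.Surjective π ↔ Function.Injective ι :=
  surjective_iff_gysin_injective_general F 𝒜 𝒯 OA OT π ι hι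
end

section
/- Let π : A → T be a surjective graded algebra map between oriented Artinian Gorenstein algebras with Gysin map ι. Then the image of ι equals the annihilator (0 :_A ker(π)) of ker(π) in A. -/
/-!
The functional `∫_A` makes the multiplication pairing on `A` perfect, so an element of `A` is
determined by the functional `b ↦ ∫_A a * b`. If `a` kills `ker π`, this functional factors
through the surjection `π`, and by perfectness of the pairing on `T` the resulting functional
on `T` is `s ↦ ∫_T t * s` for some `t`; the defining property of `ι` then gives `ι t = a`.
Conversely `∫_A ι t * x * b = ∫_T t * π x * π b` vanishes for every `b` when `π x = 0`.
-/

section Pairing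

variable {F A : Type*} [Field F] [CommRing A] [Algebra F A] {φ : A →ₗ[F] F}

theorem eq_of_forall_map_mul_eq (hφ : ∀ a : A, a ≠ 0 → ∃ b : A, φ (a * b) ≠ 0) {a a' : A}
    (h : ∀ b, φ (a * b) = φ (a' * b)) : a = a' := by
  by_contra hne
  obtain ⟨b, hb⟩ := hφ (a - a') (sub_ne_zero.mpr hne)
  exact hb (by rw [sub_mul, map_sub, h, sub_self])

theorem exists_forall_map_mul_eq [FiniteDimensional F A]
    (hφ : ∀ a : A, a ≠ 0 → ∃ b : A, φ (a * b) ≠ 0) (f : Module.Dual F A) :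
    ∃ t : A, ∀ b, φ (t * b) = f b := by
  let Φ : A →ₗ[F] Module.Dual F A := (LinearMap.mul F A).compr₂ φ
  have hΦ : Function.Injective Φ := (injective_iff_map_eq_zero Φ).mpr fun t ht =>
    by_contra fun h => (hφ t h).elim fun b hb => hb (LinearMap.congr_fun ht b)
  obtain ⟨t, ht⟩ := (LinearMap.injective_iff_surjective_of_finrank_eq_finrank
    Subspace.dual_finrank_eq.symm).mp hΦ f
  exact ⟨t, LinearMap.congr_fun ht⟩

end Pairing

section Gysin

variable {F A T : Type*} [Field F] [CommRing A] [Algebra F A] [CommRing T] [Algebra F T]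
  {φA : A →ₗ[F] F} {φT : T →ₗ[F] F} {π : A →ₐ[F] T} {ι : T →ₗ[F] A}

theorem gysin_mul_eq_zero_of_map_eq_zero (hA : ∀ a : A, a ≠ 0 → ∃ b : A, φA (a * b) ≠ 0)
    (hι : ∀ (t : T) (a : A), φA (ι t * a) = φT (t * π a)) (t : T) {x : A} (hx : π x = 0) :
    ι t * x = 0 :=
  eq_of_forall_map_mul_eq hA fun b => by
    rw [mul_assoc, hι, map_mul π, hx, zero_mul, mul_zero, zero_mul, map_zero, map_zero]

theorem mem_range_gysin_of_mul_eq_zero [FiniteDimensional F T]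
    (hA : ∀ a : A, a ≠ 0 → ∃ b : A, φA (a * b) ≠ 0)
    (hT : ∀ t : T, t ≠ 0 → ∃ s : T, φT (t * s) ≠ 0) (hπ : Function.Surjective π)
    (hι : ∀ (t : T) (a : A), φA (ι t * a) = φT (t * π a)) {a : A}
    (ha : ∀ x : A, π x = 0 → a * x = 0) : a ∈ LinearMap.range ι := by
  let g : Module.Dual F A := φA ∘ₗ LinearMap.mulLeft F a
  have hg : g ∈ (LinearMap.ker π.toLinearMap).dualAnnihilator :=
    (Submodule.mem_dualAnnihilator g).mpr fun x hx => by
      simp [g, ha x (LinearMap.mem_ker.mp hx)]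
  rw [← LinearMap.range_dualMap_eq_dualAnnihilator_ker_of_surjective _ hπ] at hg
  obtain ⟨f, hf⟩ := hg
  obtain ⟨t, ht⟩ := exists_forall_map_mul_eq hT f
  refine ⟨t, eq_of_forall_map_mul_eq hA fun b => ?_⟩
  rw [hι, ht]
  exact LinearMap.congr_fun hf b

end Gysin

theorem gysin_range_eq_ann_ker_general
    (F : Type) [Field F] {A T : Type} [CommRing A] [Algebra F A] [CommRing T] [Algebra F T]
    (𝒜 : ℕ → Submodule F A) (𝒯 : ℕ → Submodule F T)
    {d k : ℕ}
    (OA : OrientedAG F 𝒜 d) (OT : OrientedAG F 𝒯 k)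
    (π : A →ₐ[F] T)
    (hsurj : Function.Surjective π)
    (ι : T →ₗ[F] A)
    (hι : ∀ (t : T) (a : A), OA.intg (ι t * a) = OT.intg (t * π a)) :
    ∀ a : A, a ∈ LinearMap.range ι ↔ (∀ x : A, π x = 0 → a * x = 0) := by
  have := OT.fin
  intro a
  constructor
  · rintro ⟨t, rfl⟩ x hx
    exact gysin_mul_eq_zero_of_map_eq_zero OA.nondeg hι t hx
  · exact mem_range_gysin_of_mul_eq_zero OA.nondeg OT.nondeg hsurj hι

/-- Remark: the image of the Gysin map is the annihilator of
`ker π` in `A`, i.e. `Im ι = (0 :_A ker π)`. -/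
theorem gysin_range_eq_ann_ker
    (F : Type) [Field F] {A T : Type} [CommRing A] [Algebra F A] [CommRing T] [Algebra F T]
    (𝒜 : ℕ → Submodule F A) (𝒯 : ℕ → Submodule F T)
    [GradedAlgebra 𝒜] [GradedAlgebra 𝒯]
    {d k : ℕ} (hk : k ≤ d)
    (OA : OrientedAG F 𝒜 d) (OT : OrientedAG F 𝒯 k)
    (π : A →ₐ[F] T) (hπ : ∀ i, ∀ a ∈ 𝒜 i, π a ∈ 𝒯 i)
    (hsurj : Function.Surjective π)
    (ι : T →ₗ[F] A)
    (hι : ∀ (t : T) (a : A), OA.intg (ι t * a) = OT.intg (t * π a)) :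
    ∀ a : A, a ∈ LinearMap.range ι ↔ (∀ x : A, π x = 0 → a * x = 0) :=
  gysin_range_eq_ann_ker_general F 𝒜 𝒯 OA OT π hsurj ι hι
end

section
/- Let A be a graded Artinian algebra over a field F with top nonzero degree d and let ∫_A : A → F^n be an orientation extending a vector space isomorphism A_d ≅ F^n. Then the generalized bilinear pairing (a,a') ↦ ∫_A a·a' is non-degenerate (i.e., for every nonzero a ∈ A there exists a' ∈ A with ∫_A a·a' ≠ 0) if and only if A is level, i.e., its socle (0 : m_A) is contained in A_d. -/
/-- Lemma: the generalized bilinear pairing attached to an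
orientation `∫_A : A → Fⁿ` is non-degenerate iff `A` is level, i.e. the socle
of `A` is contained in the top degree piece `A_d`. -/
theorem generalized_pairing_nondeg_iff_level
    (F : Type) [Field F] {A : Type} [CommRing A] [Algebra F A]
    (𝒜 : ℕ → Submodule F A) [GradedAlgebra 𝒜]
    [FiniteDimensional F A]
    {d n : ℕ}
    (htop_ne : 𝒜 d ≠ ⊥) (htop_vanish : ∀ i, d < i → 𝒜 i = ⊥)
    (intg : A →ₗ[F] (Fin n → F))
    (hsupp : ∀ i, i ≠ d → ∀ a ∈ 𝒜 i, intg a = 0)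
    (hinj : ∀ a ∈ 𝒜 d, intg a = 0 → a = 0)
    (hsurj : ∀ v : Fin n → F, ∃ a ∈ 𝒜 d, intg a = v) :
    (∀ a : A, a ≠ 0 → ∃ a' : A, intg (a * a') ≠ 0) ↔
      (∀ a : A, (∀ i, 1 ≤ i → ∀ x ∈ 𝒜 i, a * x = 0) → a ∈ 𝒜 d) := by
  classical
  constructor
  · intro h a hsoc
    -- each homogeneous component of `a` is again in the socle
    have hcomp : ∀ i j, 1 ≤ j → ∀ x ∈ 𝒜 j,
        (DirectSum.decompose 𝒜 a i : A) * x = 0 := by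
      intro i j hj x hx
      have h0 : DirectSum.decompose 𝒜 ((a * x : A)) (i + j) = 0 := by
        rw [hsoc j hj x hx]; simp
      have h1 : DirectSum.decompose 𝒜 (a * x) =
          DirectSum.decompose 𝒜 a * DirectSum.of (fun i => 𝒜 i) j ⟨x, hx⟩ := by
        rw [DirectSum.decompose_mul, DirectSum.decompose_of_mem 𝒜 hx]
      have h2 := congrArg (fun u => ((u (i + j) : 𝒜 (i + j)) : A)) h1
      simp only at h2
      rw [DirectSum.coe_mul_of_apply_add] at h2
      have h3 := congrArg (fun u => ((u : 𝒜 (i + j)) : A)) h0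
      simp only [ZeroMemClass.coe_zero] at h3
      rw [h3] at h2
      exact h2.symm
    -- every component of degree ≠ d vanishes
    have hzero : ∀ i, i ≠ d → (DirectSum.decompose 𝒜 a i : A) = 0 := by
      intro i hi
      by_contra hne
      obtain ⟨a', ha'⟩ := h _ hne
      apply ha'
      conv_lhs => rw [← DirectSum.sum_support_decompose 𝒜 a']
      rw [Finset.mul_sum, map_sum]
      apply Finset.sum_eq_zero
      intro j _
      by_cases hj : j = 0
      · subst hj
        apply hsupp i hi
        have := SetLike.mul_mem_graded (SetLike.coe_mem (DirectSum.decompose 𝒜 a i))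
          (SetLike.coe_mem (DirectSum.decompose 𝒜 a' 0))
        simpa using this
      · rw [hcomp i j (Nat.one_le_iff_ne_zero.mpr hj) _ (SetLike.coe_mem _), map_zero]
    have ha : a = (DirectSum.decompose 𝒜 a d : A) := by
      conv_lhs => rw [← DirectSum.sum_support_decompose 𝒜 a]
      refine Finset.sum_eq_single d (fun b _ hb => hzero b hb) (fun hd => ?_)
      rw [DFinsupp.notMem_support_iff.mp hd]
      simp
    rw [ha]
    exact SetLike.coe_mem _
  · intro h a ha
    have claim : ∀ k : ℕ, ∀ c : A, ∀ s : ℕ, c ∈ 𝒜 s → d < k + s → a * c ≠ 0 →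
        ∃ a', intg (a * a') ≠ 0 := by
      intro k
      induction k with
      | zero =>
        intro c s hc hlt hne
        exfalso
        apply hne
        rw [htop_vanish s (by omega)] at hc
        simp only [Submodule.mem_bot] at hc
        rw [hc, mul_zero]
      | succ k ih =>
        intro c s hc hlt hne
        by_cases hb : ∀ i, 1 ≤ i → ∀ x ∈ 𝒜 i, a * c * x = 0
        · exact ⟨c, fun h0 => hne (hinj _ (h (a * c) hb) h0)⟩
        · push_neg at hb
          obtain ⟨i, hi1, x, hx, hne'⟩ := hb
          exact ih (c * x) (s + i) (SetLike.mul_mem_graded hc hx) (by omega)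
            (by rwa [← mul_assoc])
    have h1 : (1 : A) ∈ 𝒜 0 := SetLike.GradedOne.one_mem
    exact claim (d + 1) 1 0 h1 (by omega) (by rwa [mul_one])
end

section
/- With A, B oriented AG algebras of socle degree d, T an oriented AG algebra of socle degree k, surjective maps π_A, π_B with Thom classes τ_A, τ_B satisfying π_A(τ_A)=π_B(τ_B), the Hilbert series of the connected sum satisfies H(A #_T B, t) = H(A,t) + H(B,t) − (1 + t^{d−k}) H(T,t). -/
set_option synthInstance.maxHeartbeats 1000000
set_option maxHeartbeats 1000000

open Module

lemma aux_finrank_map_add {F V W : Type} [Field F] [AddCommGroup V] [Module F V]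
    [AddCommGroup W] [Module F W] [FiniteDimensional F V]
    (M : Submodule F V) (f : V →ₗ[F] W) :
    finrank F (M.map f) + finrank F ((LinearMap.ker f).comap M.subtype) = finrank F M := by
  have h := LinearMap.finrank_range_add_finrank_ker (f.comp M.subtype)
  rw [LinearMap.ker_comp] at h
  rw [← h, LinearMap.range_comp, Submodule.range_subtype]

lemma aux_finrank_comap_subtype {F V : Type} [Field F] [AddCommGroup V] [Module F V]
    (M N : Submodule F V) :
    finrank F (N.comap M.subtype) = finrank F ↥(M ⊓ N) := by
  rw [← Submodule.map_comap_subtype]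
  exact (Submodule.equivMapOfInjective M.subtype M.injective_subtype _).finrank_eq

lemma aux_finrank_prod {F A B : Type} [Field F] [AddCommGroup A] [Module F A]
    [AddCommGroup B] [Module F B] [FiniteDimensional F A] [FiniteDimensional F B]
    (p : Submodule F A) (q : Submodule F B) :
    finrank F (p.prod q) = finrank F p + finrank F q := by
  have e : ↥(p.prod q) ≃ₗ[F] ↥p × ↥q :=
    { toFun := fun x => (⟨x.1.1, x.2.1⟩, ⟨x.1.2, x.2.2⟩),
      map_add' := fun x y => rfl,
      map_smul' := fun c x => rfl,
      invFun := fun y => ⟨(y.1.1, y.2.1), ⟨y.1.2, y.2.2⟩⟩,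
      left_inv := fun x => rfl, right_inv := fun y => rfl }
  rw [e.finrank_eq, Module.finrank_prod]

lemma aux_decompose {F A T : Type} [Field F] [CommRing A] [Algebra F A] [CommRing T] [Algebra F T]
    (𝒜 : ℕ → Submodule F A) (𝒯 : ℕ → Submodule F T) [GradedAlgebra 𝒜] [GradedAlgebra 𝒯]
    (f : A →ₗ[F] T) (m : ℕ) (hf : ∀ j, ∀ a ∈ 𝒜 j, f a ∈ 𝒯 (j + m)) (a : A) (i : ℕ) :
    ((DirectSum.decompose 𝒯 (f a) i : 𝒯 i) : T)
      = if m ≤ i then f ((DirectSum.decompose 𝒜 a (i - m) : 𝒜 (i - m)) : A) else 0 := by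
  classical
  let g : T →+ T :=
    { toFun := fun x => ((DirectSum.decompose 𝒯 x i : 𝒯 i) : T),
      map_zero' := by simp,
      map_add' := by intro x y; simp }
  have hg : ∀ x : T, ((DirectSum.decompose 𝒯 x i : 𝒯 i) : T) = g x := fun _ => rfl
  conv_lhs => rw [hg, ← DirectSum.sum_support_decompose 𝒜 a, map_sum, map_sum]
  by_cases h : m ≤ i
  · rw [if_pos h]
    rw [Finset.sum_eq_single (i - m)]
    · have hmem := hf (i - m) _ (SetLike.coe_mem (DirectSum.decompose 𝒜 a (i - m)))
      rw [Nat.sub_add_cancel h] at hmem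
      exact DirectSum.decompose_of_mem_same 𝒯 hmem
    · intro j _ hj
      have hmem := hf j _ (SetLike.coe_mem (DirectSum.decompose 𝒜 a j))
      have : ((DirectSum.decompose 𝒯 (f ((DirectSum.decompose 𝒜 a j : 𝒜 j) : A)) i : 𝒯 i) : T) = 0 :=
        DirectSum.decompose_of_mem_ne 𝒯 hmem (by omega)
      exact this
    · intro hns
      rw [DFinsupp.notMem_support_iff] at hns
      show ((DirectSum.decompose 𝒯 (f _) i : 𝒯 i) : T) = _
      rw [hns]
      simp
  · rw [if_neg h]
    apply Finset.sum_eq_zero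
    intro j _
    have hmem := hf j _ (SetLike.coe_mem (DirectSum.decompose 𝒜 a j))
    exact DirectSum.decompose_of_mem_ne 𝒯 hmem (by omega)


/-- Lemma: Hilbert series of the connected sum.
`H(A #_T B, t) = H(A,t) + H(B,t) − (1 + t^{d−k}) H(T,t)`, stated degreewise:
`dim (A #_T B)_i + dim T_i + dim T_{i-(d-k)} = dim A_i + dim B_i`. -/
theorem connectedSum_hilbertSeries
    (F : Type) [Field F] {A B T : Type}
    [CommRing A] [Algebra F A] [CommRing B] [Algebra F B] [CommRing T] [Algebra F T]
    (𝒜 : ℕ → Submodule F A) (ℬ : ℕ → Submodule F B) (𝒯 : ℕ → Submodule F T)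
    [GradedAlgebra 𝒜] [GradedAlgebra ℬ] [GradedAlgebra 𝒯]
    [FiniteDimensional F A] [FiniteDimensional F B] [FiniteDimensional F T]
    {d k : ℕ} (hk : k < d)
    (OA : OrientedAG F 𝒜 d) (OB : OrientedAG F ℬ d) (OT : OrientedAG F 𝒯 k)
    (πA : A →ₐ[F] T) (hπA : ∀ i, ∀ a ∈ 𝒜 i, πA a ∈ 𝒯 i) (hπAs : Function.Surjective πA)
    (πB : B →ₐ[F] T) (hπB : ∀ i, ∀ b ∈ ℬ i, πB b ∈ 𝒯 i) (hπBs : Function.Surjective πB)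
    (τA : A) (hτA_mem : τA ∈ 𝒜 (d - k))
    (hτA : ∀ a : A, OA.intg (τA * a) = OT.intg (πA a))
    (τB : B) (hτB_mem : τB ∈ ℬ (d - k))
    (hτB : ∀ b : B, OB.intg (τB * b) = OT.intg (πB b))
    (hmem : πA τA = πB τB) :
    ∀ (P : Subalgebra F (A × B)),
      P = AlgHom.equalizer (πA.comp (AlgHom.fst F A B)) (πB.comp (AlgHom.snd F A B)) →
      ∀ (τ : P), (τ : A × B) = (τA, τB) →
      ∀ (I : Ideal P), I = Ideal.span {τ} →
      ∀ i : ℕ,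
        Module.finrank F
          ((Submodule.comap (Subalgebra.val P).toLinearMap ((𝒜 i).prod (ℬ i))).map
            (Ideal.Quotient.mkₐ F I).toLinearMap)
          + Module.finrank F (𝒯 i)
          + (if d - k ≤ i then Module.finrank F (𝒯 (i - (d - k))) else 0)
        = Module.finrank F (𝒜 i) + Module.finrank F (ℬ i) := by
  classical
  intro P hP τ hτ I hI i
  haveI : FiniteDimensional F (A × B) := inferInstance
  haveI hPfin : FiniteDimensional F ↥P := by
    rw [hP]; infer_instance
  -- membership in P
  have hmemP : ∀ x : A × B, x ∈ P ↔ πA x.1 = πB x.2 := by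
    intro x; rw [hP]; exact Iff.rfl
  have hPe : ∀ p : ↥P, πA (p : A × B).1 = πB (p : A × B).2 := fun p => (hmemP _).mp p.2
  -- graded decomposition commutes with πA, πB
  have hdecA : ∀ (a : A) (n : ℕ),
      ((DirectSum.decompose 𝒯 (πA a) n : 𝒯 n) : T)
        = πA ((DirectSum.decompose 𝒜 a n : 𝒜 n) : A) := by
    intro a n
    have := aux_decompose 𝒜 𝒯 πA.toLinearMap 0
      (by intro j a ha; simpa using hπA j a ha) a n
    simpa using this
  have hdecB : ∀ (b : B) (n : ℕ),
      ((DirectSum.decompose 𝒯 (πB b) n : 𝒯 n) : T)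
        = πB ((DirectSum.decompose ℬ b n : ℬ n) : B) := by
    intro b n
    have := aux_decompose ℬ 𝒯 πB.toLinearMap 0
      (by intro j b hb; simpa using hπB j b hb) b n
    simpa using this
  -- degreewise surjectivity
  have hsurjA : ∀ n, ∀ t ∈ 𝒯 n, ∃ a ∈ 𝒜 n, πA a = t := by
    intro n t ht
    obtain ⟨a, rfl⟩ := hπAs t
    exact ⟨_, SetLike.coe_mem _, by rw [← hdecA, DirectSum.decompose_of_mem_same 𝒯 ht]⟩
  have hsurjB : ∀ n, ∀ t ∈ 𝒯 n, ∃ b ∈ ℬ n, πB b = t := by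
    intro n t ht
    obtain ⟨b, rfl⟩ := hπBs t
    exact ⟨_, SetLike.coe_mem _, by rw [← hdecB, DirectSum.decompose_of_mem_same 𝒯 ht]⟩
  -- Gorenstein duality: multiplication by τA kills exactly ker πA
  have hkerA : ∀ a : A, (τA * a = 0 ↔ πA a = 0) := by
    intro a
    constructor
    · intro h0
      by_contra hne
      obtain ⟨s, hs⟩ := OT.nondeg _ hne
      obtain ⟨c, rfl⟩ := hπAs s
      apply hs
      rw [← map_mul, ← hτA, ← mul_assoc, h0, zero_mul, map_zero]
    · intro h0
      by_contra hne
      obtain ⟨c, hc⟩ := OA.nondeg _ hne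
      apply hc
      rw [mul_assoc, hτA, map_mul, h0, zero_mul, map_zero]
  have hkerB : ∀ b : B, (τB * b = 0 ↔ πB b = 0) := by
    intro b
    constructor
    · intro h0
      by_contra hne
      obtain ⟨s, hs⟩ := OT.nondeg _ hne
      obtain ⟨c, rfl⟩ := hπBs s
      apply hs
      rw [← map_mul, ← hτB, ← mul_assoc, h0, zero_mul, map_zero]
    · intro h0
      by_contra hne
      obtain ⟨c, hc⟩ := OB.nondeg _ hne
      apply hc
      rw [mul_assoc, hτB, map_mul, h0, zero_mul, map_zero]
  -- coercion of τ * p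
  have hc1 : ∀ p : ↥P, ((τ * p : ↥P) : A × B).1 = τA * (p : A × B).1 := by
    intro p; simp [hτ]
  have hc2 : ∀ p : ↥P, ((τ * p : ↥P) : A × B).2 = τB * (p : A × B).2 := by
    intro p; simp [hτ]
  -- the two linear maps with equal kernels
  set ν : ↥P →ₗ[F] T :=
    πA.toLinearMap ∘ₗ (LinearMap.fst F A B) ∘ₗ (Subalgebra.val P).toLinearMap with hν
  set μ : ↥P →ₗ[F] ↥P := LinearMap.mulLeft F τ with hμ
  have hker : LinearMap.ker μ = LinearMap.ker ν := by
    ext p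
    simp only [LinearMap.mem_ker, hμ, hν, LinearMap.mulLeft_apply, LinearMap.coe_comp,
      Function.comp_apply, AlgHom.toLinearMap_apply, Subalgebra.coe_val, LinearMap.fst_apply]
    constructor
    · intro h
      have h1 : ((τ * p : ↥P) : A × B).1 = 0 := by rw [h]; rfl
      rw [hc1 p] at h1
      exact (hkerA _).mp h1
    · intro h
      have e1 : τA * (p : A × B).1 = 0 := (hkerA _).mpr h
      have e2 : τB * (p : A × B).2 = 0 := (hkerB _).mpr (by rw [← hPe p, h])
      apply Subtype.ext
      apply Prod.ext
      · rw [hc1 p, e1]; rfl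
      · rw [hc2 p, e2]; rfl
  -- image of the degree-n piece of P under ν is 𝒯 n
  have himν : ∀ n : ℕ,
      Submodule.map ν (Submodule.comap (Subalgebra.val P).toLinearMap ((𝒜 n).prod (ℬ n)))
        = 𝒯 n := by
    intro n
    apply le_antisymm
    · rintro t ⟨p, hp, rfl⟩
      exact hπA n _ (Submodule.mem_prod.mp (Submodule.mem_comap.mp hp)).1
    · intro t ht
      obtain ⟨a, ha, hat⟩ := hsurjA n t ht
      obtain ⟨b, hb, hbt⟩ := hsurjB n t ht
      refine ⟨⟨(a, b), (hmemP (a, b)).mpr (by rw [hat, hbt])⟩,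
        Submodule.mem_comap.mpr (Submodule.mem_prod.mpr ⟨ha, hb⟩), hat⟩
  -- dimension of the degree-n piece of P
  have hPi_count : ∀ n : ℕ,
      finrank F (Submodule.comap (Subalgebra.val P).toLinearMap ((𝒜 n).prod (ℬ n)))
        + finrank F (𝒯 n) = finrank F (𝒜 n) + finrank F (ℬ n) := by
    intro n
    set M0 := (𝒜 n).prod (ℬ n) with hM0def
    set φ : (A × B) →ₗ[F] T :=
      πA.toLinearMap ∘ₗ LinearMap.fst F A B - πB.toLinearMap ∘ₗ LinearMap.snd F A B with hφdef
    have hφ : ∀ x : A × B, φ x = πA x.1 - πB x.2 := fun x => rfl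
    have h := aux_finrank_map_add M0 φ
    rw [aux_finrank_comap_subtype] at h
    have hrange : Submodule.map φ M0 = 𝒯 n := by
      apply le_antisymm
      · rintro t ⟨x, hx, rfl⟩
        rw [hφ]
        exact sub_mem (hπA n _ (Submodule.mem_prod.mp hx).1) (hπB n _ (Submodule.mem_prod.mp hx).2)
      · intro t ht
        obtain ⟨a, ha, hat⟩ := hsurjA n t ht
        exact ⟨(a, 0), Submodule.mem_prod.mpr ⟨ha, zero_mem _⟩, by rw [hφ]; simp [hat]⟩
    have hkerφ : LinearMap.range (Subalgebra.val P).toLinearMap = LinearMap.ker φ := by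
      ext x
      constructor
      · rintro ⟨y, rfl⟩
        rw [LinearMap.mem_ker, hφ]
        have := hPe y
        simp only [Subalgebra.coe_val, AlgHom.toLinearMap_apply] at *
        rw [this, sub_self]
      · intro hx
        rw [LinearMap.mem_ker, hφ, sub_eq_zero] at hx
        exact ⟨⟨x, (hmemP x).mpr hx⟩, rfl⟩
    have hPn : finrank F
        (Submodule.comap (Subalgebra.val P).toLinearMap M0)
          = finrank F ↥(M0 ⊓ LinearMap.ker φ) := by
      have e1 : Submodule.map (Subalgebra.val P).toLinearMap
          (Submodule.comap (Subalgebra.val P).toLinearMap M0) = M0 ⊓ LinearMap.ker φ := by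
        rw [Submodule.map_comap_eq, hkerφ, inf_comm]
      rw [← e1]
      exact (Submodule.equivMapOfInjective _ Subtype.val_injective _).finrank_eq
    have hM0 : finrank F M0 = finrank F (𝒜 n) + finrank F (ℬ n) := aux_finrank_prod _ _
    rw [hrange] at h
    omega
  -- the multiplication-by-τA map is graded of degree d-k
  have hfA : ∀ jj, ∀ a ∈ 𝒜 jj, (LinearMap.mulLeft F τA) a ∈ 𝒜 (jj + (d - k)) := by
    intro jj a ha
    simpa [add_comm] using SetLike.mul_mem_graded hτA_mem ha
  have hfB : ∀ jj, ∀ b ∈ ℬ jj, (LinearMap.mulLeft F τB) b ∈ ℬ (jj + (d - k)) := by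
    intro jj b hb
    simpa [add_comm] using SetLike.mul_mem_graded hτB_mem hb
  -- kernel of the quotient map
  have hkermk : LinearMap.ker (Ideal.Quotient.mkₐ F I).toLinearMap
      = Submodule.restrictScalars F I := by
    ext x
    simp [LinearMap.mem_ker, Ideal.Quotient.eq_zero_iff_mem]
  have h1 := aux_finrank_map_add
    (Submodule.comap (Subalgebra.val P).toLinearMap ((𝒜 i).prod (ℬ i)))
    (Ideal.Quotient.mkₐ F I).toLinearMap
  rw [hkermk, aux_finrank_comap_subtype] at h1
  by_cases hni : d - k ≤ i
  · -- the intersection with the ideal is τ · P_{i - (d-k)}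
    have hij : (d - k) + (i - (d - k)) = i := by omega
    have hinf : (Submodule.comap (Subalgebra.val P).toLinearMap ((𝒜 i).prod (ℬ i)))
        ⊓ Submodule.restrictScalars F I
        = Submodule.map μ (Submodule.comap (Subalgebra.val P).toLinearMap
            ((𝒜 (i - (d - k))).prod (ℬ (i - (d - k))))) := by
      apply le_antisymm
      · rintro x hx
        obtain ⟨hx1, hx2⟩ := Submodule.mem_inf.mp hx
        rw [Submodule.restrictScalars_mem, hI, Ideal.mem_span_singleton] at hx2
        obtain ⟨p, hp⟩ := hx2
        have hxa : (x : A × B).1 ∈ 𝒜 i := (Submodule.mem_prod.mp (Submodule.mem_comap.mp hx1)).1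
        have hxb : (x : A × B).2 ∈ ℬ i := (Submodule.mem_prod.mp (Submodule.mem_comap.mp hx1)).2
        have hx1' : (x : A × B).1 = τA * (p : A × B).1 := by rw [hp]; exact hc1 p
        have hx2' : (x : A × B).2 = τB * (p : A × B).2 := by rw [hp]; exact hc2 p
        set paj : A := ((DirectSum.decompose 𝒜 (p : A × B).1 (i - (d - k)) : 𝒜 (i - (d - k))) : A)
          with hpajdef
        set pbj : B := ((DirectSum.decompose ℬ (p : A × B).2 (i - (d - k)) : ℬ (i - (d - k))) : B)
          with hpbjdef
        have hpj_mem : (paj, pbj) ∈ P := by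
          apply (hmemP _).mpr
          show πA paj = πB pbj
          rw [hpajdef, hpbjdef, ← hdecA, ← hdecB, hPe p]
        have keyA : τA * (p : A × B).1 = τA * paj := by
          have haux := aux_decompose 𝒜 𝒜 (LinearMap.mulLeft F τA) (d - k) hfA (p : A × B).1 i
          rw [if_pos hni] at haux
          simp only [LinearMap.mulLeft_apply] at haux
          rw [← haux, DirectSum.decompose_of_mem_same 𝒜 (hx1' ▸ hxa)]
        have keyB : τB * (p : A × B).2 = τB * pbj := by
          have haux := aux_decompose ℬ ℬ (LinearMap.mulLeft F τB) (d - k) hfB (p : A × B).2 i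
          rw [if_pos hni] at haux
          simp only [LinearMap.mulLeft_apply] at haux
          rw [← haux, DirectSum.decompose_of_mem_same ℬ (hx2' ▸ hxb)]
        refine ⟨⟨(paj, pbj), hpj_mem⟩,
          Submodule.mem_comap.mpr (Submodule.mem_prod.mpr ⟨SetLike.coe_mem _, SetLike.coe_mem _⟩),
          ?_⟩
        apply Subtype.ext
        apply Prod.ext
        · show ((τ * ⟨(paj, pbj), hpj_mem⟩ : ↥P) : A × B).1 = (x : A × B).1
          rw [hc1, hx1', keyA]
        · show ((τ * ⟨(paj, pbj), hpj_mem⟩ : ↥P) : A × B).2 = (x : A × B).2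
          rw [hc2, hx2', keyB]
      · rintro x ⟨p, hp, rfl⟩
        have hpa : (p : A × B).1 ∈ 𝒜 (i - (d - k)) :=
          (Submodule.mem_prod.mp (Submodule.mem_comap.mp hp)).1
        have hpb : (p : A × B).2 ∈ ℬ (i - (d - k)) :=
          (Submodule.mem_prod.mp (Submodule.mem_comap.mp hp)).2
        apply Submodule.mem_inf.mpr
        constructor
        · apply Submodule.mem_comap.mpr
          apply Submodule.mem_prod.mpr
          constructor
          · show ((τ * p : ↥P) : A × B).1 ∈ 𝒜 i
            rw [hc1 p, ← hij]
            exact SetLike.mul_mem_graded hτA_mem hpa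
          · show ((τ * p : ↥P) : A × B).2 ∈ ℬ i
            rw [hc2 p, ← hij]
            exact SetLike.mul_mem_graded hτB_mem hpb
        · rw [Submodule.restrictScalars_mem, hI, Ideal.mem_span_singleton]
          exact ⟨p, rfl⟩
    have hcount : finrank F ↥(Submodule.map μ (Submodule.comap (Subalgebra.val P).toLinearMap
        ((𝒜 (i - (d - k))).prod (ℬ (i - (d - k)))))) = finrank F (𝒯 (i - (d - k))) := by
      have ha := aux_finrank_map_add
        (Submodule.comap (Subalgebra.val P).toLinearMap ((𝒜 (i - (d - k))).prod (ℬ (i - (d - k))))) μ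
      have hb := aux_finrank_map_add
        (Submodule.comap (Subalgebra.val P).toLinearMap ((𝒜 (i - (d - k))).prod (ℬ (i - (d - k))))) ν
      rw [hker] at ha
      rw [himν (i - (d - k))] at hb
      omega
    rw [hinf, hcount] at h1
    rw [if_pos hni]
    have := hPi_count i
    omega
  · -- low degrees: the intersection is zero
    have hzero : (Submodule.comap (Subalgebra.val P).toLinearMap ((𝒜 i).prod (ℬ i)))
        ⊓ Submodule.restrictScalars F I = ⊥ := by
      rw [eq_bot_iff]
      rintro x hx
      obtain ⟨hx1, hx2⟩ := Submodule.mem_inf.mp hx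
      rw [Submodule.restrictScalars_mem, hI, Ideal.mem_span_singleton] at hx2
      obtain ⟨p, hp⟩ := hx2
      have hxa : (x : A × B).1 ∈ 𝒜 i := (Submodule.mem_prod.mp (Submodule.mem_comap.mp hx1)).1
      have hxb : (x : A × B).2 ∈ ℬ i := (Submodule.mem_prod.mp (Submodule.mem_comap.mp hx1)).2
      have hx1' : (x : A × B).1 = τA * (p : A × B).1 := by rw [hp]; exact hc1 p
      have hx2' : (x : A × B).2 = τB * (p : A × B).2 := by rw [hp]; exact hc2 p
      have keyA : (x : A × B).1 = 0 := by
        have haux := aux_decompose 𝒜 𝒜 (LinearMap.mulLeft F τA) (d - k) hfA (p : A × B).1 i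
        rw [if_neg hni] at haux
        simp only [LinearMap.mulLeft_apply] at haux
        rw [hx1', ← haux, DirectSum.decompose_of_mem_same 𝒜 (hx1' ▸ hxa)]
      have keyB : (x : A × B).2 = 0 := by
        have haux := aux_decompose ℬ ℬ (LinearMap.mulLeft F τB) (d - k) hfB (p : A × B).2 i
        rw [if_neg hni] at haux
        simp only [LinearMap.mulLeft_apply] at haux
        rw [hx2', ← haux, DirectSum.decompose_of_mem_same ℬ (hx2' ▸ hxb)]
      have : (x : A × B) = 0 := Prod.ext keyA keyB
      simpa [Submodule.mem_bot] using Subtype.ext this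
    rw [hzero] at h1
    rw [if_neg hni]
    have h2 := hPi_count i
    have h3 : finrank F (⊥ : Submodule F ↥P) = 0 := finrank_bot F ↥P
    omega
end

section
/- Let F have characteristic zero or characteristic greater than d. Let A and B be standard graded Artinian Gorenstein F-algebras of socle degree d satisfying the strong Lefschetz property, and let T be a graded Artinian Gorenstein algebra of socle degree k with k < ⌊(d−1)/2⌋, together with surjective F-algebra maps π_A : A → T and π_B : B → T (compatible with Thom classes, π_A(τ_A)=π_B(τ_B)). Then the fibered product A ×_T B and the connected sum A #_T B both satisfy the weak Lefschetz property. -/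
/-- The strong Lefschetz property for a graded algebra with graded pieces `𝒜`. -/
def SLPFor {F R : Type} [Field F] [CommRing R] [Algebra F R]
    (𝒜 : ℕ → Submodule F R) : Prop :=
  ∃ ℓ ∈ 𝒜 1, ∀ i j : ℕ,
    (∀ x ∈ 𝒜 i, ∀ y ∈ 𝒜 i, ℓ ^ j * x = ℓ ^ j * y → x = y) ∨
    (∀ z ∈ 𝒜 (i + j), ∃ x ∈ 𝒜 i, ℓ ^ j * x = z)

/-- The weak Lefschetz property for a graded algebra with graded pieces `𝒜`:
some degree-one element `ℓ` makes every multiplication map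
`×ℓ : 𝒜 i → 𝒜 (i+1)` of maximal rank (injective or surjective). -/
def WLPFor {F R : Type} [Field F] [CommRing R] [Algebra F R]
    (𝒜 : ℕ → Submodule F R) : Prop :=
  ∃ ℓ ∈ 𝒜 1, ∀ i : ℕ,
    (∀ x ∈ 𝒜 i, ∀ y ∈ 𝒜 i, ℓ * x = ℓ * y → x = y) ∨
    (∀ z ∈ 𝒜 (i + 1), ∃ x ∈ 𝒜 i, ℓ * x = z)

set_option synthInstance.maxHeartbeats 1000000
set_option maxHeartbeats 1000000
set_option linter.unusedSectionVars false

open Function Module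

section Aux
variable {F R : Type} [Field F] [CommRing R] [Algebra F R]
  (ℛ : ℕ → Submodule F R) [GradedAlgebra ℛ]

def gMul (c : R) {i j : ℕ} (h : ∀ x : R, x ∈ ℛ i → c * x ∈ ℛ j) :
    ℛ i →ₗ[F] ℛ j where
  toFun x := ⟨c * x, h x x.2⟩
  map_add' x y := by ext; simp [mul_add]
  map_smul' t x := by ext; simp [mul_smul_comm]

@[simp] lemma gMul_apply (c : R) {i j : ℕ} (h : ∀ x : R, x ∈ ℛ i → c * x ∈ ℛ j)
    (x : ℛ i) : (gMul ℛ c h x : R) = c * x := rfl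

variable {d : ℕ}

lemma finrank_le_dual (O : OrientedAG F ℛ d) (i : ℕ) (hi : i ≤ d) :
    finrank F (ℛ i) ≤ finrank F (ℛ (d - i)) := by
  classical
  haveI := O.fin
  let Φ : ℛ i →ₗ[F] Module.Dual F (ℛ (d - i)) :=
    { toFun := fun a =>
        { toFun := fun b => O.intg ((a : R) * (b : R))
          map_add' := fun x y => by simp [mul_add]
          map_smul' := fun t x => by simp [mul_smul_comm] }
      map_add' := fun x y => by ext b; simp [add_mul]
      map_smul' := fun t x => by ext b; simp [smul_mul_assoc] }
  have hinj : Injective Φ := by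
    rw [← LinearMap.ker_eq_bot, LinearMap.ker_eq_bot']
    intro a ha
    by_contra hne
    have hanz : (a : R) ≠ 0 := fun h => hne (Subtype.ext h)
    obtain ⟨b, hb⟩ := O.nondeg a hanz
    apply hb
    have key : O.intg ((a : R) * b) =
        O.intg ((a : R) * (DirectSum.decompose ℛ b (d - i) : R)) := by
      conv_lhs => rw [← DirectSum.sum_support_decompose ℛ b]
      rw [Finset.mul_sum, map_sum]
      rw [Finset.sum_eq_single (d - i)]
      · intro r _ hr
        exact O.intg_supported (i + r) (by omega) _
          (SetLike.mul_mem_graded a.2 (DirectSum.decompose ℛ b r).2)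
      · intro h
        rw [DFinsupp.notMem_support_iff.mp h]
        simp
    rw [key]
    have : Φ a ⟨(DirectSum.decompose ℛ b (d - i) : R), (DirectSum.decompose ℛ b (d - i)).2⟩ = 0 := by
      rw [ha]; rfl
    exact this
  calc finrank F (ℛ i) ≤ finrank F (Module.Dual F (ℛ (d - i))) :=
        LinearMap.finrank_le_finrank_of_injective hinj
    _ = finrank F (ℛ (d - i)) := Subspace.dual_finrank_eq

lemma finrank_duality (O : OrientedAG F ℛ d) (i : ℕ) (hi : i ≤ d) :
    finrank F (ℛ i) = finrank F (ℛ (d - i)) := by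
  refine le_antisymm (finrank_le_dual ℛ O i hi) ?_
  have := finrank_le_dual ℛ O (d - i) (by omega)
  rwa [Nat.sub_sub_self hi] at this

def GoodAt (d : ℕ) (ℓ : R) (m : ℕ) : Prop :=
  (∀ x ∈ ℛ m, ∀ y ∈ ℛ m, ℓ ^ (d - 2*m) * x = ℓ ^ (d - 2*m) * y → x = y) ∧
  (∀ z ∈ ℛ (d - m), ∃ x ∈ ℛ m, ℓ ^ (d - 2*m) * x = z)

lemma powMul_mem {ℓ : R} (hl : ℓ ∈ ℛ 1) {e i j : ℕ} (hij : e + i = j) :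
    ∀ x : R, x ∈ ℛ i → ℓ ^ e * x ∈ ℛ j := by
  intro x hx
  have h1 : ℓ ^ e ∈ ℛ (e • 1) := SetLike.pow_mem_graded e hl
  have h2 : ℓ ^ e * x ∈ ℛ (e • 1 + i) := SetLike.mul_mem_graded h1 hx
  have : e • 1 + i = j := by simpa using hij
  rwa [this] at h2

/-- the multiplication map `ℓ^(d-2m) : ℛ m → ℛ (d-m)` -/
def powMulMap (d : ℕ) (ℓ : R) (hl : ℓ ∈ ℛ 1) (m : ℕ) (hm : 2*m ≤ d) :
    ℛ m →ₗ[F] ℛ (d - m) :=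
  gMul ℛ (ℓ ^ (d - 2*m)) (powMul_mem ℛ hl (by omega))

lemma goodAt_iff_bij (d : ℕ) (ℓ : R) (hl : ℓ ∈ ℛ 1) (m : ℕ) (hm : 2*m ≤ d) :
    GoodAt ℛ d ℓ m ↔ Bijective (powMulMap ℛ d ℓ hl m hm) := by
  constructor
  · rintro ⟨h1, h2⟩
    constructor
    · intro a b hab
      have : ℓ ^ (d - 2*m) * (a : R) = ℓ ^ (d - 2*m) * (b : R) := by
        have := congrArg (Subtype.val) hab
        simpa [powMulMap] using this
      exact Subtype.ext (h1 a a.2 b b.2 this)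
    · rintro ⟨z, hz⟩
      obtain ⟨x, hx, hxe⟩ := h2 z hz
      exact ⟨⟨x, hx⟩, Subtype.ext (by simpa [powMulMap] using hxe)⟩
  · rintro ⟨hinj, hsurj⟩
    constructor
    · intro x hx y hy hxy
      have : powMulMap ℛ d ℓ hl m hm ⟨x, hx⟩ = powMulMap ℛ d ℓ hl m hm ⟨y, hy⟩ :=
        Subtype.ext (by simpa [powMulMap] using hxy)
      simpa using congrArg Subtype.val (hinj this)
    · intro z hz
      obtain ⟨x, hx⟩ := hsurj ⟨z, hz⟩
      exact ⟨(x : R), x.2, by simpa [powMulMap] using congrArg Subtype.val hx⟩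

lemma goodAt_of_branch (O : OrientedAG F ℛ d) (ℓ : R) (hl : ℓ ∈ ℛ 1) (m : ℕ) (hm : 2*m ≤ d)
    (h : (∀ x ∈ ℛ m, ∀ y ∈ ℛ m, ℓ ^ (d - 2*m) * x = ℓ ^ (d - 2*m) * y → x = y) ∨
      (∀ z ∈ ℛ (d - m), ∃ x ∈ ℛ m, ℓ ^ (d - 2*m) * x = z)) :
    GoodAt ℛ d ℓ m := by
  haveI := O.fin
  have hfr : finrank F (ℛ m) = finrank F (ℛ (d - m)) := finrank_duality ℛ O m (by omega)
  have key := LinearMap.injective_iff_surjective_of_finrank_eq_finrank (f := powMulMap ℛ d ℓ hl m hm) hfr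
  rcases h with h | h
  · have hinj : Injective (powMulMap ℛ d ℓ hl m hm) := by
      intro a b hab
      exact Subtype.ext (h a a.2 b b.2 (by simpa [powMulMap] using congrArg Subtype.val hab))
    exact (goodAt_iff_bij ℛ d ℓ hl m hm).mpr ⟨hinj, key.mp hinj⟩
  · have hsurj : Surjective (powMulMap ℛ d ℓ hl m hm) := by
      rintro ⟨z, hz⟩
      obtain ⟨x, hx, hxe⟩ := h z hz
      exact ⟨⟨x, hx⟩, Subtype.ext (by simpa [powMulMap] using hxe)⟩
    exact (goodAt_iff_bij ℛ d ℓ hl m hm).mpr ⟨key.mpr hsurj, hsurj⟩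

lemma good_mul_inj {ℓ : R} (hg : ∀ m, 2*m ≤ d → GoodAt ℛ d ℓ m) (i : ℕ) (hi : 2*i+1 ≤ d) :
    ∀ x ∈ ℛ i, ∀ y ∈ ℛ i, ℓ * x = ℓ * y → x = y := by
  intro x hx y hy hxy
  refine (hg i (by omega)).1 x hx y hy ?_
  have he : d - 2*i = (d - 2*i - 1) + 1 := by omega
  rw [he, pow_succ, mul_assoc, mul_assoc, hxy]

lemma good_mul_surj (O : OrientedAG F ℛ d) {ℓ : R} (hl : ℓ ∈ ℛ 1)
    (hg : ∀ m, 2*m ≤ d → GoodAt ℛ d ℓ m) (i : ℕ) (hi : d ≤ 2*i) :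
    ∀ z ∈ ℛ (i+1), ∃ x ∈ ℛ i, ℓ * x = z := by
  intro z hz
  by_cases hid : d < i + 1
  · rw [O.top_vanish _ hid, Submodule.mem_bot] at hz
    exact ⟨0, zero_mem _, by simp [hz]⟩
  · push_neg at hid
    set m := d - i - 1 with hm
    have hm2 : 2*m ≤ d := by omega
    have hdm : d - m = i + 1 := by omega
    obtain ⟨x, hx, hxe⟩ := (hg m hm2).2 z (by rwa [hdm])
    have he : d - 2*m = ((d - 2*m) - 1) + 1 := by omega
    refine ⟨ℓ ^ (d - 2*m - 1) * x, powMul_mem ℛ hl (by omega) x hx, ?_⟩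
    rw [← mul_assoc, ← pow_succ', ← he, hxe]

/-- graded surjectivity in each degree -/
lemma graded_surj {T' : Type} [CommRing T'] [Algebra F T'] (𝒯 : ℕ → Submodule F T')
    [GradedAlgebra 𝒯] (π : R →ₐ[F] T') (hπ : ∀ i, ∀ a ∈ ℛ i, π a ∈ 𝒯 i)
    (hs : Surjective π) (i : ℕ) (t : T') (ht : t ∈ 𝒯 i) :
    ∃ r ∈ ℛ i, π r = t := by
  classical
  obtain ⟨r0, hr0⟩ := hs t
  refine ⟨(DirectSum.decompose ℛ r0 i : R), (DirectSum.decompose ℛ r0 i).2, ?_⟩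
  have expand : t = ∑ s ∈ (DirectSum.decompose ℛ r0).support, π (DirectSum.decompose ℛ r0 s : R) := by
    rw [← map_sum, ← hr0]
    congr 1
    exact (DirectSum.sum_support_decompose ℛ r0).symm
  have key := congrArg (fun u => (DirectSum.decompose 𝒯 u i : T')) expand
  simp only [DirectSum.decompose_sum] at key
  rw [DirectSum.decompose_of_mem_same 𝒯 ht] at key
  rw [key]
  rw [DFinsupp.finset_sum_apply]
  rw [AddSubmonoidClass.coe_finset_sum]
  rw [Finset.sum_eq_single i]
  · rw [DirectSum.decompose_of_mem_same 𝒯 (hπ i _ (DirectSum.decompose ℛ r0 i).2)]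
  · intro s _ hs'
    rw [DirectSum.decompose_of_mem_ne 𝒯 (hπ s _ (DirectSum.decompose ℛ r0 s).2) hs']
  · intro h
    rw [DFinsupp.notMem_support_iff.mp h]
    simp

/-- an element of a low graded piece which is a multiple of a high-degree element is zero -/
lemma lowdeg_mul_eq_zero {n j : ℕ} (c q : R) (hc : c ∈ ℛ n) (hj : j < n)
    (h : q * c ∈ ℛ j) : q * c = 0 := by
  classical
  have expand : q * c = ∑ s ∈ (DirectSum.decompose ℛ q).support,
      (DirectSum.decompose ℛ q s : R) * c := by
    rw [← Finset.sum_mul]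
    congr 1
    exact (DirectSum.sum_support_decompose ℛ q).symm
  have key := congrArg (fun u => (DirectSum.decompose ℛ u j : R)) expand
  dsimp only at key
  rw [DirectSum.decompose_of_mem_same ℛ h] at key
  simp only [DirectSum.decompose_sum] at key
  rw [key, DFinsupp.finset_sum_apply, AddSubmonoidClass.coe_finset_sum]
  apply Finset.sum_eq_zero
  intro s _
  rw [DirectSum.decompose_of_mem_ne ℛ
    (SetLike.mul_mem_graded (DirectSum.decompose ℛ q s).2 hc) (by omega)]

lemma det_ne_zero_iff_bij {M N : Type} [AddCommGroup M] [Module F M] [AddCommGroup N] [Module F N]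
    {ι : Type} [Fintype ι] [DecidableEq ι] (b1 : Basis ι F M) (b2 : Basis ι F N)
    (f : M →ₗ[F] N) : (LinearMap.toMatrix b1 b2 f).det ≠ 0 ↔ Bijective f := by
  constructor
  · intro h
    have hu : IsUnit (LinearMap.toMatrix b1 b2 f).det := isUnit_iff_ne_zero.mpr h
    have hco := LinearEquiv.coe_ofIsUnitDet hu
    have hb := (LinearEquiv.ofIsUnitDet hu).bijective
    have : ⇑(LinearEquiv.ofIsUnitDet hu) = ⇑f := by
      exact congrArg DFunLike.coe hco
    rwa [this] at hb
  · intro h hdet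
    let E := LinearEquiv.ofBijective f h
    have comp : f.comp (E.symm : N →ₗ[F] M) = LinearMap.id := by
      ext x; simp [E]
    have hmul : (LinearMap.toMatrix b1 b2 f) * (LinearMap.toMatrix b2 b1 (E.symm : N →ₗ[F] M)) = 1 := by
      rw [← LinearMap.toMatrix_comp b2 b1 b2, comp, LinearMap.toMatrix_id]
    have := congrArg Matrix.det hmul
    rw [Matrix.det_mul, hdet, zero_mul, Matrix.det_one] at this
    exact zero_ne_one this

lemma line_pow_mul (u v : R) (e : ℕ) (t : F) (x : R) :
    (u + t • (v - u)) ^ e * x = ∑ s ∈ Finset.range (e+1),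
      ((e.choose s : F) * t ^ s) • ((v - u) ^ s * u ^ (e - s) * x) := by
  rw [add_comm u (t • (v - u)), add_pow, Finset.sum_mul]
  apply Finset.sum_congr rfl
  intro s _
  rw [smul_pow]
  rw [smul_mul_assoc, smul_mul_assoc, smul_mul_assoc, mul_smul]
  rw [smul_comm ((e.choose s : F)) (t ^ s)]
  congr 1
  rw [Nat.cast_smul_eq_nsmul, nsmul_eq_mul]
  ring

lemma exists_det_poly (O : OrientedAG F ℛ d) (u v : R) (hu : u ∈ ℛ 1) (hv : v ∈ ℛ 1)
    (m : ℕ) (hm : 2*m ≤ d) :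
    ∃ p : Polynomial F, ∀ t : F,
      p.eval t ≠ 0 ↔ GoodAt ℛ d (u + t • (v - u)) m := by
  classical
  haveI := O.fin
  set e := d - 2*m with he
  have hline : ∀ t : F, u + t • (v - u) ∈ ℛ 1 := fun t =>
    add_mem hu (Submodule.smul_mem _ _ (sub_mem hv hu))
  have hc : ∀ s : Fin (e+1), ∀ x : R, x ∈ ℛ m →
      (v - u) ^ (s:ℕ) * u ^ (e - (s:ℕ)) * x ∈ ℛ (d - m) := by
    intro s x hx
    have h1 : (v - u) ^ (s:ℕ) ∈ ℛ ((s:ℕ) • 1) := SetLike.pow_mem_graded _ (sub_mem hv hu)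
    have h2 : u ^ (e - (s:ℕ)) ∈ ℛ ((e - (s:ℕ)) • 1) := SetLike.pow_mem_graded _ hu
    have h3 := SetLike.mul_mem_graded (SetLike.mul_mem_graded h1 h2) hx
    have h4 : (s:ℕ) • 1 + (e - (s:ℕ)) • 1 + m = d - m := by
      have := s.2
      simp only [smul_eq_mul, mul_one]
      omega
    rwa [h4] at h3
  let H : Fin (e+1) → (ℛ m →ₗ[F] ℛ (d - m)) := fun s =>
    gMul ℛ ((v - u) ^ (s:ℕ) * u ^ (e - (s:ℕ))) (hc s)
  have keyid : ∀ t : F, powMulMap ℛ d (u + t • (v - u)) (hline t) m hm =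
      ∑ s : Fin (e+1), ((e.choose (s:ℕ) : F) * t ^ (s:ℕ)) • H s := by
    intro t
    apply LinearMap.ext
    intro x
    apply Subtype.ext
    have lhs : (powMulMap ℛ d (u + t • (v - u)) (hline t) m hm x : R)
        = (u + t • (v - u)) ^ e * x := rfl
    rw [lhs, line_pow_mul]
    rw [LinearMap.sum_apply]
    rw [AddSubmonoidClass.coe_finset_sum]
    rw [← Fin.sum_univ_eq_sum_range (fun s =>
      ((e.choose s : F) * t ^ s) • ((v - u) ^ s * u ^ (e - s) * (x:R)))]
    apply Finset.sum_congr rfl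
    intro s _
    rw [LinearMap.smul_apply, SetLike.val_smul]
    rfl
  -- matrices
  let r := finrank F (ℛ m)
  have hfr : finrank F (ℛ (d - m)) = r := (finrank_duality ℛ O m (by omega)).symm
  let b1 : Basis (Fin r) F (ℛ m) := Module.finBasis F (ℛ m)
  let b2 : Basis (Fin r) F (ℛ (d - m)) := (Module.finBasis F (ℛ (d - m))).reindex (finCongr hfr)
  let Ms : Fin (e+1) → Matrix (Fin r) (Fin r) F := fun s => LinearMap.toMatrix b1 b2 (H s)
  let Pm : Matrix (Fin r) (Fin r) (Polynomial F) := fun i j => ∑ s : Fin (e+1),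
      Polynomial.C ((e.choose (s:ℕ) : F) * Ms s i j) * Polynomial.X ^ (s:ℕ)
  refine ⟨Pm.det, ?_⟩
  intro t
  have hmap : Pm.map (Polynomial.eval t) =
      LinearMap.toMatrix b1 b2 (powMulMap ℛ d (u + t • (v - u)) (hline t) m hm) := by
    rw [keyid t, map_sum]
    ext i j
    rw [Matrix.map_apply]
    simp only [Matrix.map_apply, Pm, Polynomial.eval_finset_sum, Polynomial.eval_mul,
      Polynomial.eval_C, Polynomial.eval_pow, Polynomial.eval_X, Matrix.sum_apply,
      LinearEquiv.map_smul, Matrix.smul_apply, smul_eq_mul]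
    apply Finset.sum_congr rfl
    intro s _
    show (e.choose (s:ℕ) : F) * Ms s i j * t ^ (s:ℕ) = (e.choose (s:ℕ) : F) * t ^ (s:ℕ) * Ms s i j
    ring
  have hdet : Pm.det.eval t =
      (LinearMap.toMatrix b1 b2 (powMulMap ℛ d (u + t • (v - u)) (hline t) m hm)).det := by
    have h := RingHom.map_det (Polynomial.evalRingHom t) Pm
    rw [RingHom.mapMatrix_apply, Polynomial.coe_evalRingHom] at h
    rw [hmap] at h
    exact h
  rw [goodAt_iff_bij ℛ d _ (hline t) m hm, ← det_ne_zero_iff_bij b1 b2, ← hdet]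
end Aux

/-- Theorem B: for `k < ⌊(d−1)/2⌋`, fibered products and
connected sums over `T` of standard graded AG algebras with the SLP have the
WLP. -/

theorem wlp_fiberProduct_connectedSum
    (F : Type) [Field F] {A B T : Type}
    [CommRing A] [Algebra F A] [CommRing B] [Algebra F B] [CommRing T] [Algebra F T]
    (𝒜 : ℕ → Submodule F A) (ℬ : ℕ → Submodule F B) (𝒯 : ℕ → Submodule F T)
    [GradedAlgebra 𝒜] [GradedAlgebra ℬ] [GradedAlgebra 𝒯]
    {d k : ℕ} (hkd : k < (d - 1) / 2)
    (hchar : CharZero F ∨ (Infinite F ∧ d < ringChar F))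
    (OA : OrientedAG F 𝒜 d) (OB : OrientedAG F ℬ d) (OT : OrientedAG F 𝒯 k)
    -- `A` and `B` are standard graded and satisfy the SLP:
    (hstdA : ∀ i, 𝒜 (i + 1) = 𝒜 1 * 𝒜 i) (hstdB : ∀ i, ℬ (i + 1) = ℬ 1 * ℬ i)
    (hA : SLPFor 𝒜) (hB : SLPFor ℬ)
    (πA : A →ₐ[F] T) (hπA : ∀ i, ∀ a ∈ 𝒜 i, πA a ∈ 𝒯 i) (hπAs : Function.Surjective πA)
    (πB : B →ₐ[F] T) (hπB : ∀ i, ∀ b ∈ ℬ i, πB b ∈ 𝒯 i) (hπBs : Function.Surjective πB)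
    -- the Thom classes, compatible under the projections:
    (τA : A) (hτA_mem : τA ∈ 𝒜 (d - k))
    (hτA : ∀ a : A, OA.intg (τA * a) = OT.intg (πA a))
    (τB : B) (hτB_mem : τB ∈ ℬ (d - k))
    (hτB : ∀ b : B, OB.intg (τB * b) = OT.intg (πB b))
    (hmem : πA τA = πB τB)
    (P : Subalgebra F (A × B))
    (hP : P = AlgHom.equalizer (πA.comp (AlgHom.fst F A B)) (πB.comp (AlgHom.snd F A B)))
    (τ : P) (hτ : (τ : A × B) = (τA, τB))
    (I : Ideal P) (hI : I = Ideal.span {τ}) :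
    -- the fibered product `A ×_T B` has the WLP …
    WLPFor (fun i => Submodule.comap (Subalgebra.val P).toLinearMap ((𝒜 i).prod (ℬ i))) ∧
    -- … and so does the connected sum `A #_T B = (A ×_T B)/I`:
    (∀ (C : Type) (_ : CommRing C) (_ : Algebra F C) (φ : P →ₐ[F] C),
      Function.Surjective φ → RingHom.ker φ.toRingHom = I →
      WLPFor (fun i =>
        (Submodule.comap (Subalgebra.val P).toLinearMap ((𝒜 i).prod (ℬ i))).map
          φ.toLinearMap)) := by
  classical
  haveI := OA.fin
  haveI := OB.fin
  haveI : Infinite F := by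
    rcases hchar with h | ⟨h, _⟩
    · exact inferInstance
    · exact h
  -- arithmetic
  have hk2 : 2 * k + 3 ≤ d := by
    have h1 : (k + 1) * 2 ≤ d - 1 := (Nat.le_div_iff_mul_le (by norm_num)).mp hkd
    omega
  -- SLP elements and their goodness
  obtain ⟨ℓA, hℓA1, hAs⟩ := hA
  obtain ⟨ℓB, hℓB1, hBs⟩ := hB
  have goodA : ∀ m, 2*m ≤ d → GoodAt 𝒜 d ℓA m := by
    intro m hm
    have h := hAs m (d - 2*m)
    have hrw : m + (d - 2*m) = d - m := by omega
    rw [hrw] at h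
    exact goodAt_of_branch 𝒜 OA ℓA hℓA1 m hm h
  have goodB : ∀ m, 2*m ≤ d → GoodAt ℬ d ℓB m := by
    intro m hm
    have h := hBs m (d - 2*m)
    have hrw : m + (d - 2*m) = d - m := by omega
    rw [hrw] at h
    exact goodAt_of_branch ℬ OB ℓB hℓB1 m hm h
  -- partner degree-one elements
  obtain ⟨bA, hbA1, hbAe⟩ := graded_surj ℬ 𝒯 πB hπB hπBs 1 (πA ℓA) (hπA 1 _ hℓA1)
  obtain ⟨aB, haB1, haBe⟩ := graded_surj 𝒜 𝒯 πA hπA hπAs 1 (πB ℓB) (hπB 1 _ hℓB1)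
  -- polynomials
  have exA := fun (m : ℕ) (hm : 2*m ≤ d) => exists_det_poly 𝒜 OA ℓA aB hℓA1 haB1 m hm
  have exB := fun (m : ℕ) (hm : 2*m ≤ d) => exists_det_poly ℬ OB bA ℓB hbA1 hℓB1 m hm
  choose pA hpA using exA
  choose pB hpB using exB
  have hrange : ∀ m ∈ Finset.range (d/2+1), 2*m ≤ d := by
    intro m hm
    rw [Finset.mem_range] at hm
    have h1 : m ≤ d / 2 := by omega
    have := (Nat.le_div_iff_mul_le (by norm_num : 0 < 2)).mp h1
    omega
  set qA : Polynomial F :=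
    ∏ m ∈ (Finset.range (d/2+1)).attach, pA m.1 (hrange m.1 m.2) with hqA
  set qB : Polynomial F :=
    ∏ m ∈ (Finset.range (d/2+1)).attach, pB m.1 (hrange m.1 m.2) with hqB
  have hqA0 : qA.eval 0 ≠ 0 := by
    rw [hqA, Polynomial.eval_prod]
    rw [Finset.prod_ne_zero_iff]
    intro m _
    apply (hpA m.1 (hrange m.1 m.2) 0).mpr
    have : ℓA + (0:F) • (aB - ℓA) = ℓA := by rw [zero_smul, add_zero]
    rw [this]
    exact goodA m.1 (hrange m.1 m.2)
  have hqB1 : qB.eval 1 ≠ 0 := by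
    rw [hqB, Polynomial.eval_prod]
    rw [Finset.prod_ne_zero_iff]
    intro m _
    apply (hpB m.1 (hrange m.1 m.2) 1).mpr
    have : bA + (1:F) • (ℓB - bA) = ℓB := by rw [one_smul]; ring
    rw [this]
    exact goodB m.1 (hrange m.1 m.2)
  have hq0 : qA * qB ≠ 0 :=
    mul_ne_zero (fun h => hqA0 (by rw [h, Polynomial.eval_zero]))
      (fun h => hqB1 (by rw [h, Polynomial.eval_zero]))
  have : ¬ ∀ t : F, (qA * qB).eval t = 0 := fun h => hq0 (Polynomial.zero_of_eval_zero _ h)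
  push_neg at this
  obtain ⟨t, ht⟩ := this
  rw [Polynomial.eval_mul] at ht
  have htA : qA.eval t ≠ 0 := fun h => ht (by rw [h, zero_mul])
  have htB : qB.eval t ≠ 0 := fun h => ht (by rw [h, mul_zero])
  -- the common Lefschetz element
  set ℓa : A := ℓA + t • (aB - ℓA) with hℓa
  set ℓb : B := bA + t • (ℓB - bA) with hℓb
  have hℓa1 : ℓa ∈ 𝒜 1 := add_mem hℓA1 (Submodule.smul_mem _ _ (sub_mem haB1 hℓA1))
  have hℓb1 : ℓb ∈ ℬ 1 := add_mem hbA1 (Submodule.smul_mem _ _ (sub_mem hℓB1 hbA1))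
  have goodℓa : ∀ m, 2*m ≤ d → GoodAt 𝒜 d ℓa m := by
    intro m hm
    have hmem' : m ∈ Finset.range (d/2+1) := by
      rw [Finset.mem_range]
      have := (Nat.le_div_iff_mul_le (by norm_num : 0 < 2)).mpr (by omega : m * 2 ≤ d)
      omega
    rw [hqA, Polynomial.eval_prod, Finset.prod_ne_zero_iff] at htA
    exact (hpA m hm t).mp (by
      have := htA ⟨m, hmem'⟩ (Finset.mem_attach _ _)
      convert this using 2)
  have goodℓb : ∀ m, 2*m ≤ d → GoodAt ℬ d ℓb m := by
    intro m hm
    have hmem' : m ∈ Finset.range (d/2+1) := by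
      rw [Finset.mem_range]
      have := (Nat.le_div_iff_mul_le (by norm_num : 0 < 2)).mpr (by omega : m * 2 ≤ d)
      omega
    rw [hqB, Polynomial.eval_prod, Finset.prod_ne_zero_iff] at htB
    exact (hpB m hm t).mp (by
      have := htB ⟨m, hmem'⟩ (Finset.mem_attach _ _)
      convert this using 2)
  have compat : πA ℓa = πB ℓb := by
    rw [hℓa, hℓb, map_add, map_add, map_smul, map_smul, map_sub, map_sub, hbAe, haBe]
  have hmemP : (ℓa, ℓb) ∈ P := by
    rw [hP]
    refine (AlgHom.mem_equalizer _ _ _).mpr ?_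
    simpa using compat
  set ℓP : ↥P := ⟨(ℓa, ℓb), hmemP⟩ with hℓP
  set 𝒢 : ℕ → Submodule F ↥P :=
    fun i => Submodule.comap (Subalgebra.val P).toLinearMap ((𝒜 i).prod (ℬ i)) with h𝒢
  have memG : ∀ (i : ℕ) (x : ↥P), x ∈ 𝒢 i ↔ ((x : A × B).1 ∈ 𝒜 i ∧ (x : A × B).2 ∈ ℬ i) :=
    fun i x => Iff.rfl
  have hℓPG : ℓP ∈ 𝒢 1 := (memG 1 ℓP).mpr ⟨hℓa1, hℓb1⟩
  -- key injectivity and surjectivity statements on the fibered product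
  have key1 : ∀ i, 2*i+1 ≤ d → ∀ x ∈ 𝒢 i, ∀ y ∈ 𝒢 i, ℓP * x = ℓP * y → x = y := by
    intro i hi x hx y hy hxy
    have hco := congrArg (Subtype.val) hxy
    rw [MulMemClass.coe_mul, MulMemClass.coe_mul] at hco
    have h1 : ℓa * (x : A × B).1 = ℓa * (y : A × B).1 := by
      simpa [hℓP, Prod.fst_mul] using congrArg Prod.fst hco
    have h2 : ℓb * (x : A × B).2 = ℓb * (y : A × B).2 := by
      simpa [hℓP, Prod.snd_mul] using congrArg Prod.snd hco
    have e1 := good_mul_inj 𝒜 goodℓa i hi _ ((memG i x).mp hx).1 _ ((memG i y).mp hy).1 h1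
    have e2 := good_mul_inj ℬ goodℓb i hi _ ((memG i x).mp hx).2 _ ((memG i y).mp hy).2 h2
    exact Subtype.ext (Prod.ext e1 e2)
  have key2 : ∀ i, d ≤ 2*i → ∀ z ∈ 𝒢 (i+1), ∃ x ∈ 𝒢 i, ℓP * x = z := by
    intro i hi z hz
    obtain ⟨a, ha, hae⟩ :=
      good_mul_surj 𝒜 OA hℓa1 goodℓa i hi (z : A × B).1 ((memG _ z).mp hz).1
    obtain ⟨b, hb, hbe⟩ :=
      good_mul_surj ℬ OB hℓb1 goodℓb i hi (z : A × B).2 ((memG _ z).mp hz).2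
    have hTa : πA a = 0 := by
      have h := hπA i a ha
      rw [OT.top_vanish i (by omega)] at h
      simpa using h
    have hTb : πB b = 0 := by
      have h := hπB i b hb
      rw [OT.top_vanish i (by omega)] at h
      simpa using h
    have habP : (a, b) ∈ P := by
      rw [hP]
      refine (AlgHom.mem_equalizer _ _ _).mpr ?_
      show πA a = πB b
      rw [hTa, hTb]
    refine ⟨⟨(a, b), habP⟩, (memG i _).mpr ⟨ha, hb⟩, ?_⟩
    apply Subtype.ext
    rw [MulMemClass.coe_mul]
    show ((ℓa, ℓb) : A × B) * (a, b) = (z : A × B)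
    rw [Prod.mk_mul_mk]
    exact Prod.ext (by simpa using hae) (by simpa using hbe)
  -- membership of products
  have hmulG : ∀ i, ∀ x ∈ 𝒢 i, ℓP * x ∈ 𝒢 (i+1) := by
    intro i x hx
    refine (memG _ _).mpr ⟨?_, ?_⟩
    · rw [MulMemClass.coe_mul]
      have h := SetLike.mul_mem_graded hℓa1 ((memG i x).mp hx).1
      rw [show (1 + i) = i + 1 by omega] at h
      simpa [hℓP, Prod.fst_mul] using h
    · rw [MulMemClass.coe_mul]
      have h := SetLike.mul_mem_graded hℓb1 ((memG i x).mp hx).2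
      rw [show (1 + i) = i + 1 by omega] at h
      simpa [hℓP, Prod.snd_mul] using h
  constructor
  · -- fibered product
    refine ⟨ℓP, hℓPG, ?_⟩
    intro i
    by_cases hi : 2*i+1 ≤ d
    · exact Or.inl (key1 i hi)
    · exact Or.inr (key2 i (by omega))
  · -- connected sum
    intro C _ _ φ hφs hker
    refine ⟨φ ℓP, Submodule.mem_map_of_mem hℓPG, ?_⟩
    intro i
    by_cases hi : 2*i+1 ≤ d
    · left
      rintro x' hx' y' hy' heq
      obtain ⟨x, hx, rfl⟩ := hx'
      obtain ⟨y, hy, rfl⟩ := hy'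
      have heq2 : φ (ℓP * x) = φ (ℓP * y) := by
        rw [map_mul, map_mul]
        exact heq
      have hkerw : ℓP * x - ℓP * y ∈ I := by
        rw [← hker]
        exact RingHom.mem_ker.mpr (by rw [map_sub]; exact sub_eq_zero.mpr heq2)
      rw [hI, Ideal.mem_span_singleton] at hkerw
      obtain ⟨c, hc⟩ := hkerw
      set w : ↥P := ℓP * x - ℓP * y with hw
      have hwG : w ∈ 𝒢 (i+1) := sub_mem (hmulG i x hx) (hmulG i y hy)
      have hwco : (w : A × B) = (τ : A × B) * (c : A × B) := by
        rw [hc, MulMemClass.coe_mul]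
      have hw1 : (w : A × B).1 = (c : A × B).1 * τA := by
        rw [hwco, hτ, Prod.fst_mul]
        exact mul_comm _ _
      have hw2 : (w : A × B).2 = (c : A × B).2 * τB := by
        rw [hwco, hτ, Prod.snd_mul]
        exact mul_comm _ _
      have hz1 : (w : A × B).1 = 0 := by
        rw [hw1]
        exact lowdeg_mul_eq_zero 𝒜 τA (c : A × B).1 hτA_mem
          (by omega : i + 1 < d - k) (by rw [← hw1]; exact ((memG _ w).mp hwG).1)
      have hz2 : (w : A × B).2 = 0 := by
        rw [hw2]
        exact lowdeg_mul_eq_zero ℬ τB (c : A × B).2 hτB_mem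
          (by omega : i + 1 < d - k) (by rw [← hw2]; exact ((memG _ w).mp hwG).2)
      have hw0 : w = 0 := by
        apply Subtype.ext
        rw [show ((0 : ↥P) : A × B) = 0 from rfl]
        exact Prod.ext (by simpa using hz1) (by simpa using hz2)
      have hxy : ℓP * x = ℓP * y := by
        have := sub_eq_zero.mp (by rw [← hw]; exact hw0)
        exact this
      exact congrArg _ (key1 i hi x hx y hy hxy)
    · right
      rintro z' hz'
      obtain ⟨z, hz, rfl⟩ := hz'
      obtain ⟨x, hxG, hxe⟩ := key2 i (by omega) z hz
      refine ⟨φ x, Submodule.mem_map_of_mem hxG, ?_⟩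
      show φ ℓP * φ x = φ z
      rw [← map_mul, hxe]
end

section
/- Let F have characteristic zero or characteristic > m−1, let A = F[x]/(x^m), B = F[y]/(y^m), T = F[z]/(z^t) with 1 < t < m, π_A(x) = z, π_B(y) = z, and orientations ∫_A : x^{m−1} ↦ 1, ∫_B : y^{m−1} ↦ 1, ∫_T : z^{t−1} ↦ 1 (so τ_A = x^{m−t}, τ_B = y^{m−t} after adjusting the sign of ∫_B). Then the connected sum C = A #_T B ≅ F[z_1,z_2]/(z_1^{m−t}, z_1^t z_2 − z_2^2) (with deg z_1 = 1, deg z_2 = t) has the weak Lefschetz property if and only if t ≠ m/2, and C never has the strong Lefschetz property. -/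
open MvPolynomial

/-!
Write `n = m - t`. In `C = F[z₁,z₂]/(z₁ⁿ, z₁ᵗz₂ - z₂²)` the relation `z₂^(b+1) = z₁^(bt) z₂`
shows that the degree-`i` piece is spanned by `z₁ⁱ`, together with `z₁^(i-t) z₂` when `t ≤ i`.
Both are nonzero as long as the exponent of `z₁` is below `n`: map `C` to `K[e]/(e(e - xᵗ))` with
`K = F[x]/(xⁿ)`, which is free over `K` on `1, e`.

Since `t > 1`, every linear form is a multiple of `z₁`. Multiplication by `z₁` maps degree `i`
onto degree `i + 1` except at `i = t - 1`, where the new generator `z₂` appears; there it is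
injective exactly when `z₁ᵗ ≠ 0` or `z₁^(t-1) = 0`, i.e. when `n ≠ t`. Every linear form `ℓ`
satisfies `ℓ^(m-1) = 0`, while `1` and the socle element `z₁^(n-1) z₂` are nonzero, so `ℓ^(m-1)`
has maximal rank from degree `0` to degree `m - 1` for no `ℓ`.
-/

namespace AdjoinRoot

variable {R : Type*} [CommRing R]

theorem root_X_pow_pow_self (n : ℕ) : root (Polynomial.X ^ n : Polynomial R) ^ n = 0 := by
  rw [← mk_X, ← map_pow, mk_self]

theorem root_X_pow_pow_ne_zero [Nontrivial R] {n j : ℕ} (hj : j < n) :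
    root (Polynomial.X ^ n : Polynomial R) ^ j ≠ 0 := by
  rw [← mk_X, ← map_pow]
  exact mk_ne_zero_of_natDegree_lt (Polynomial.monic_X_pow n)
    (Polynomial.monic_X_pow j).ne_zero (by simpa using hj)

theorem of_ne_zero {f : Polynomial R} (hf : f.Monic) (hdeg : 0 < f.natDegree) {a : R}
    (ha : a ≠ 0) : of f a ≠ 0 := by
  rw [← mk_C]
  exact mk_ne_zero_of_natDegree_lt hf (Polynomial.C_ne_zero.mpr ha) (by simpa using hdeg)

theorem of_mul_root_ne_zero {f : Polynomial R} (hf : f.Monic) (hdeg : 1 < f.natDegree) {a : R}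
    (ha : a ≠ 0) : of f a * root f ≠ 0 := by
  rw [← mk_C, ← mk_X, ← map_mul, Polynomial.C_mul_X_eq_monomial]
  exact mk_ne_zero_of_natDegree_lt hf ((Polynomial.monomial_eq_zero_iff a 1).not.mpr ha)
    ((Polynomial.natDegree_monomial_le a).trans_lt hdeg)

end AdjoinRoot

theorem Finsupp.weight_fin_two (w : Fin 2 → ℕ) (d : Fin 2 →₀ ℕ) :
    Finsupp.weight w d = d 0 * w 0 + d 1 * w 1 := by
  simp [Finsupp.weight_apply, Finsupp.sum_fintype, Fin.sum_univ_two]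

noncomputable section

namespace ConnectedSum

variable (F : Type*) [Field F] (n t : ℕ)

abbrev ideal : Ideal (MvPolynomial (Fin 2) F) :=
  Ideal.span {X 0 ^ n, X 0 ^ t * X 1 - X 1 ^ 2}

abbrev Alg : Type _ := MvPolynomial (Fin 2) F ⧸ ideal F n t

def grade (i : ℕ) : Submodule F (Alg F n t) :=
  (weightedHomogeneousSubmodule F ![1, t] i).map (Ideal.Quotient.mkₐ F (ideal F n t)).toLinearMap

abbrev modelPoly : Polynomial (AdjoinRoot (Polynomial.X ^ n : Polynomial F)) :=
  Polynomial.X * (Polynomial.X - Polynomial.C (AdjoinRoot.root _ ^ t))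

abbrev Model : Type _ := AdjoinRoot (modelPoly F n t)

variable {F n t}

def z₁ : Alg F n t := Ideal.Quotient.mk _ (X 0)

def z₂ : Alg F n t := Ideal.Quotient.mk _ (X 1)

theorem z₁_pow_eq_zero {j : ℕ} (h : n ≤ j) : (z₁ : Alg F n t) ^ j = 0 := by
  have hn : (z₁ : Alg F n t) ^ n = 0 := by
    rw [z₁, ← map_pow, Ideal.Quotient.eq_zero_iff_mem]
    exact Ideal.subset_span (by simp)
  rw [← Nat.sub_add_cancel h, pow_add, hn, mul_zero]

theorem z₂_sq : (z₂ : Alg F n t) ^ 2 = z₁ ^ t * z₂ := by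
  rw [eq_comm, ← sub_eq_zero, z₁, z₂, ← map_pow, ← map_pow, ← map_mul, ← map_sub,
    Ideal.Quotient.eq_zero_iff_mem]
  exact Ideal.subset_span (by simp)

theorem z₂_pow_succ (b : ℕ) : (z₂ : Alg F n t) ^ (b + 1) = z₁ ^ (b * t) * z₂ := by
  induction b with
  | zero => simp
  | succ b ih =>
    rw [pow_succ, ih, mul_assoc, ← sq, z₂_sq, ← mul_assoc, ← pow_add, add_mul, one_mul]

theorem mkₐ_monomial (d : Fin 2 →₀ ℕ) :
    Ideal.Quotient.mkₐ F (ideal F n t) (monomial d 1) = z₁ ^ d 0 * z₂ ^ d 1 := by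
  simp [monomial_eq, Finsupp.prod_fintype, Fin.prod_univ_two, z₁, z₂]

theorem grade_eq_span (i : ℕ) : grade F n t i =
    Submodule.span F ((fun d : Fin 2 →₀ ℕ => (z₁ : Alg F n t) ^ d 0 * z₂ ^ d 1) ''
      {d | d 0 + d 1 * t = i}) := by
  simp only [grade, weightedHomogeneousSubmodule_eq_finsupp_supported,
    AddMonoidAlgebra.supported_eq_span_single, Submodule.map_span, Finsupp.weight_fin_two,
    Matrix.cons_val_zero, Matrix.cons_val_one, mul_one, Set.image_image]
  congr 1
  refine Set.image_congr fun d _ => ?_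
  simpa [single_eq_monomial] using mkₐ_monomial d

theorem z₁_pow_mem_grade (i : ℕ) : (z₁ : Alg F n t) ^ i ∈ grade F n t i := by
  rw [grade_eq_span]
  exact Submodule.subset_span ⟨Finsupp.single 0 i, by simp, by simp⟩

theorem z₁_pow_mul_z₂_mem_grade {i : ℕ} (hi : t ≤ i) :
    (z₁ : Alg F n t) ^ (i - t) * z₂ ∈ grade F n t i := by
  rw [grade_eq_span]
  exact Submodule.subset_span
    ⟨Finsupp.single 0 (i - t) + Finsupp.single 1 1, by simp; omega, by simp⟩

theorem grade_eq_span_singleton {i : ℕ} (hi : i < t) : grade F n t i = F ∙ z₁ ^ i := by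
  refine le_antisymm ?_ ((Submodule.span_singleton_le_iff_mem _ _).mpr (z₁_pow_mem_grade i))
  rw [grade_eq_span, Submodule.span_le]
  rintro _ ⟨d, hd : d 0 + d 1 * t = i, rfl⟩
  obtain ⟨h0, h1⟩ : d 0 = i ∧ d 1 = 0 := by
    rcases Nat.eq_zero_or_pos (d 1) with h | h
    · simp_all
    · nlinarith
  simp [h0, h1, Submodule.mem_span_singleton_self]

theorem grade_eq_span_pair {i : ℕ} (hi : t ≤ i) :
    grade F n t i = Submodule.span F {z₁ ^ i, z₁ ^ (i - t) * z₂} := by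
  refine le_antisymm ?_ (Submodule.span_le.mpr <| Set.insert_subset_iff.mpr
    ⟨z₁_pow_mem_grade i, Set.singleton_subset_iff.mpr (z₁_pow_mul_z₂_mem_grade hi)⟩)
  rw [grade_eq_span, Submodule.span_le]
  rintro _ ⟨d, hd : d 0 + d 1 * t = i, rfl⟩
  show z₁ ^ d 0 * z₂ ^ d 1 ∈ _
  cases hb : d 1 with
  | zero =>
    rw [hb, zero_mul, add_zero] at hd
    simpa [hd] using Submodule.subset_span (Set.mem_insert _ _)
  | succ b =>
    have hexp : d 0 + b * t = i - t := by rw [hb] at hd; rw [← hd]; ring_nf; omega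
    rw [z₂_pow_succ, ← mul_assoc, ← pow_add, hexp]
    exact Submodule.subset_span (by simp)

theorem grade_succ_eq_map {i : ℕ} (hi : i + 1 ≠ t) :
    grade F n t (i + 1) = (grade F n t i).map (LinearMap.mulLeft F z₁) := by
  rcases lt_or_gt_of_ne hi with hlt | hgt
  · rw [grade_eq_span_singleton hlt, grade_eq_span_singleton (by omega), Submodule.map_span,
      Set.image_singleton, LinearMap.mulLeft_apply, pow_succ']
  · rw [grade_eq_span_pair (by omega), grade_eq_span_pair (by omega), Submodule.map_span,
      Set.image_pair, LinearMap.mulLeft_apply, LinearMap.mulLeft_apply, ← pow_succ', ← mul_assoc,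
      ← pow_succ', Nat.sub_add_comm (by omega)]

theorem exists_smul_eq_of_mem_grade {i : ℕ} (hi : i < t) {x : Alg F n t}
    (hx : x ∈ grade F n t i) : ∃ c : F, c • z₁ ^ i = x := by
  rw [grade_eq_span_singleton hi] at hx
  exact Submodule.mem_span_singleton.mp hx

theorem monic_modelPoly : (modelPoly F n t).Monic :=
  Polynomial.monic_X.mul (Polynomial.monic_X_sub_C _)

theorem natDegree_modelPoly (hn : 0 < n) : (modelPoly F n t).natDegree = 2 := by
  have : Nontrivial (AdjoinRoot (Polynomial.X ^ n : Polynomial F)) :=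
    AdjoinRoot.nontrivial _ (by simp; omega)
  rw [Polynomial.monic_X.natDegree_mul (Polynomial.monic_X_sub_C _), Polynomial.natDegree_X,
    Polynomial.natDegree_X_sub_C]

theorem root_mul_root_sub_eq_zero :
    AdjoinRoot.root (modelPoly F n t) *
      (AdjoinRoot.root _ - AdjoinRoot.of _ (AdjoinRoot.root _ ^ t)) = 0 := by
  have h : AdjoinRoot.mk (modelPoly F n t)
      (Polynomial.X * (Polynomial.X - Polynomial.C (AdjoinRoot.root _ ^ t))) = 0 :=
    AdjoinRoot.mk_self
  rwa [map_mul, map_sub, AdjoinRoot.mk_X, AdjoinRoot.mk_C] at h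

def toModel : Alg F n t →ₐ[F] Model F n t :=
  Ideal.Quotient.liftₐ _ (aeval ![AdjoinRoot.of _ (AdjoinRoot.root _), AdjoinRoot.root _]) <| by
    refine fun a ha => RingHom.mem_ker.mp <| (Ideal.span_le (I := RingHom.ker _)).mpr ?_ ha
    rintro _ (rfl | rfl)
    · rw [SetLike.mem_coe, RingHom.mem_ker, map_pow, aeval_X, Matrix.cons_val_zero, ← map_pow,
        AdjoinRoot.root_X_pow_pow_self, map_zero]
    · simp only [SetLike.mem_coe, RingHom.mem_ker, map_sub, map_mul, map_pow, aeval_X,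
        Matrix.cons_val_zero, Matrix.cons_val_one]
      rw [← map_pow]
      linear_combination -(root_mul_root_sub_eq_zero (F := F) (n := n) (t := t))

theorem toModel_z₁ : toModel (z₁ : Alg F n t) = AdjoinRoot.of _ (AdjoinRoot.root _) :=
  aeval_X _ 0

theorem toModel_z₂ : toModel (z₂ : Alg F n t) = AdjoinRoot.root _ :=
  aeval_X _ 1

theorem z₁_pow_ne_zero {j : ℕ} (hj : j < n) : (z₁ : Alg F n t) ^ j ≠ 0 := by
  have hmodel : toModel ((z₁ : Alg F n t) ^ j) ≠ 0 := by
    rw [map_pow, toModel_z₁, ← map_pow]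
    exact AdjoinRoot.of_ne_zero monic_modelPoly (by simp [natDegree_modelPoly (by omega : 0 < n)])
      (AdjoinRoot.root_X_pow_pow_ne_zero hj)
  exact fun h => hmodel (h ▸ map_zero _)

theorem z₁_pow_mul_z₂_ne_zero {k : ℕ} (hk : k < n) : (z₁ : Alg F n t) ^ k * z₂ ≠ 0 := by
  have hmodel : toModel ((z₁ : Alg F n t) ^ k * z₂) ≠ 0 := by
    rw [map_mul, map_pow, toModel_z₁, toModel_z₂, ← map_pow]
    exact AdjoinRoot.of_mul_root_ne_zero monic_modelPoly
      (by simp [natDegree_modelPoly (by omega : 0 < n)]) (AdjoinRoot.root_X_pow_pow_ne_zero hk)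
  exact fun h => hmodel (h ▸ map_zero _)

section Lefschetz

variable {F : Type} [Field F]

theorem not_wlpFor_grade_self (ht : 1 < t) : ¬ WLPFor (grade F t t) := by
  rintro ⟨ℓ, hℓ, hwlp⟩
  obtain ⟨c, rfl⟩ := exists_smul_eq_of_mem_grade ht hℓ
  have hkill : ∀ x ∈ grade F t t (t - 1), c • z₁ ^ 1 * x = 0 := by
    intro x hx
    obtain ⟨d, rfl⟩ := exists_smul_eq_of_mem_grade (by omega) hx
    rw [smul_mul_smul_comm, ← pow_add, z₁_pow_eq_zero (by omega), smul_zero]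
  rcases hwlp (t - 1) with hinj | hsurj
  · refine z₁_pow_ne_zero (by omega : t - 1 < t) (hinj _ (z₁_pow_mem_grade _) 0 (zero_mem _) ?_)
    rw [hkill _ (z₁_pow_mem_grade _), mul_zero]
  · have hz₂ : (z₁ : Alg F t t) ^ (t - t) * z₂ ∈ grade F t t (t - 1 + 1) := by
      rw [Nat.sub_add_cancel (by omega)]
      exact z₁_pow_mul_z₂_mem_grade le_rfl
    obtain ⟨x, hx, hℓx⟩ := hsurj _ hz₂
    exact z₁_pow_mul_z₂_ne_zero (by omega : t - t < t) (hℓx ▸ hkill x hx)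

theorem wlpFor_grade (hn : n ≠ t) : WLPFor (grade F n t) := by
  refine ⟨z₁, pow_one (z₁ : Alg F n t) ▸ z₁_pow_mem_grade 1, fun i => ?_⟩
  by_cases hi : i + 1 = t
  · left
    intro x hx y hy hxy
    obtain ⟨a, rfl⟩ := exists_smul_eq_of_mem_grade (by omega) hx
    obtain ⟨b, rfl⟩ := exists_smul_eq_of_mem_grade (by omega) hy
    rcases lt_or_gt_of_ne hn with hlt | hgt
    · rw [z₁_pow_eq_zero (by omega), smul_zero, smul_zero]
    · rw [mul_smul_comm, mul_smul_comm, ← pow_succ', hi] at hxy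
      rw [smul_left_injective F (z₁_pow_ne_zero hgt) hxy]
  · right
    intro z hz
    rw [grade_succ_eq_map hi] at hz
    simpa using Submodule.mem_map.mp hz

theorem wlpFor_grade_iff (ht : 1 < t) : WLPFor (grade F n t) ↔ n ≠ t :=
  ⟨fun h hn => not_wlpFor_grade_self (F := F) ht (hn ▸ h), wlpFor_grade⟩

theorem not_slpFor_grade (ht : 1 < t) (hn : 0 < n) : ¬ SLPFor (grade F n t) := by
  rintro ⟨ℓ, hℓ, hslp⟩
  obtain ⟨c, rfl⟩ := exists_smul_eq_of_mem_grade ht hℓ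
  have hpow : (c • (z₁ : Alg F n t) ^ 1) ^ (n + t - 1) = 0 := by
    rw [smul_pow, ← pow_mul, z₁_pow_eq_zero (by omega), smul_zero]
  rcases hslp 0 (n + t - 1) with hinj | hsurj
  · refine z₁_pow_ne_zero hn (hinj _ (z₁_pow_mem_grade 0) 0 (zero_mem _) ?_)
    rw [hpow, zero_mul, zero_mul]
  · have hsocle : (z₁ : Alg F n t) ^ (n + t - 1 - t) * z₂ ∈ grade F n t (0 + (n + t - 1)) := by
      rw [zero_add]
      exact z₁_pow_mul_z₂_mem_grade (by omega)
    obtain ⟨x, -, hx⟩ := hsurj _ hsocle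
    rw [hpow, zero_mul] at hx
    exact z₁_pow_mul_z₂_ne_zero (by omega : n + t - 1 - t < n) hx.symm

end Lefschetz

end ConnectedSum

end

open ConnectedSum in
theorem connectedSum_wlp_iff_not_slp_general
    (F : Type) [Field F] {m t : ℕ} (ht : 1 < t) (htm : t < m)
    (I : Ideal (MvPolynomial (Fin 2) F))
    (hI : I = Ideal.span
      {(X 0 : MvPolynomial (Fin 2) F) ^ (m - t),
        (X 0 : MvPolynomial (Fin 2) F) ^ t * X 1 - X 1 ^ 2})
    (𝒞 : ℕ → Submodule F (MvPolynomial (Fin 2) F ⧸ I))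
    (h𝒞 : ∀ i, 𝒞 i =
      (weightedHomogeneousSubmodule F (![1, t] : Fin 2 → ℕ) i).map
        (Ideal.Quotient.mkₐ F I).toLinearMap) :
    (WLPFor 𝒞 ↔ m ≠ 2 * t) ∧ ¬ SLPFor 𝒞 := by
  subst hI
  obtain rfl : 𝒞 = grade F (m - t) t := funext h𝒞
  exact ⟨(wlpFor_grade_iff ht).trans (by omega), not_slpFor_grade ht (by omega)⟩

/-- (Proposition: Lefschetz properties of the connected sum
`C = A #_T B ≅ F[z₁,z₂]/(z₁^{m−t}, z₁ᵗz₂ − z₂²)` of `A = F[x]/(xᵐ)` and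
`B = F[y]/(yᵐ)` over `T = F[z]/(zᵗ)`, where `deg z₁ = 1` and `deg z₂ = t`):
`C` has the WLP iff `t ≠ m/2`, and `C` never has the SLP. -/
theorem connectedSum_wlp_iff_not_slp
    (F : Type) [Field F] {m t : ℕ} (ht : 1 < t) (htm : t < m)
    (hchar : CharZero F ∨ m - 1 < ringChar F)
    (I : Ideal (MvPolynomial (Fin 2) F))
    (hI : I = Ideal.span
      {(X 0 : MvPolynomial (Fin 2) F) ^ (m - t),
        (X 0 : MvPolynomial (Fin 2) F) ^ t * X 1 - X 1 ^ 2})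
    (𝒞 : ℕ → Submodule F (MvPolynomial (Fin 2) F ⧸ I))
    (h𝒞 : ∀ i, 𝒞 i =
      (weightedHomogeneousSubmodule F (![1, t] : Fin 2 → ℕ) i).map
        (Ideal.Quotient.mkₐ F I).toLinearMap) :
    (WLPFor 𝒞 ↔ m ≠ 2 * t) ∧ ¬ SLPFor 𝒞 :=
  connectedSum_wlp_iff_not_slp_general F ht htm I hI 𝒞 h𝒞
end
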